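/- arXiv:2302.04417 — 7 statements merged into one kernel-verified Lean document; each statement's English description precedes it below -/
import Mathlib

section
/- Let T ≥ 1 and, for each t ∈ {1,…,T}, let K^t be an m_t × n_t real matrix and L^t be a q_t × m_t real matrix such that {K^t v : v ∈ ℝ^{n_t}, v ≥ 0} = {z ∈ ℝ^{m_t} : L^t z ≥ 0}. Then {(⊗_{t=1}^T K^t) v : v ≥ 0} ⊆ {z : (⊗_{t=1}^T L^t) z ≥ 0}. -/
open Matrix

noncomputable section

/-- Iterated Kronecker product of a family of matrices, in product-index form:
rows and columns are indexed by tuples of indices, which correspond to the rows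
and columns of the iterated Kronecker product via the lexicographic bijection. -/
def kronPi {T : ℕ} {R C : Fin T → Type*} (A : ∀ t, Matrix (R t) (C t) ℝ) :
    Matrix (∀ t, R t) (∀ t, C t) ℝ :=
  Matrix.of fun r c => ∏ t, A t (r t) (c t)

/-- The `V`-representation: the cone of all nonnegative combinations of columns of `K`. -/
def coneV {m n : Type*} [Fintype n] (K : Matrix m n ℝ) : Set (m → ℝ) :=
  {z | ∃ v : n → ℝ, 0 ≤ v ∧ K.mulVec v = z}

/-- The `H`-representation: the cone cut out by the inequalities `L z ≥ 0`. -/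
def coneH {q m : Type*} [Fintype m] (L : Matrix q m ℝ) : Set (m → ℝ) :=
  {z | 0 ≤ L.mulVec z}

lemma kronPi_mul {T : ℕ} {R M C : Fin T → Type*} [∀ t, Fintype (M t)]
    (A : ∀ t, Matrix (R t) (M t) ℝ) (B : ∀ t, Matrix (M t) (C t) ℝ) :
    kronPi A * kronPi B = kronPi (fun t => A t * B t) := by
  ext r c
  simp only [kronPi, Matrix.mul_apply, Matrix.of_apply]
  rw [Fintype.prod_sum]
  exact Finset.sum_congr rfl fun x _ => (Finset.prod_mul_distrib).symm

/-- if for every `t` the cone `{Kᵗ v : v ≥ 0}` equals `{z : Lᵗ z ≥ 0}`,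
then `{(⊗ₜ Kᵗ) v : v ≥ 0} ⊆ {z : (⊗ₜ Lᵗ) z ≥ 0}`. -/
theorem kron_coneV_subset_kron_coneH
    (T : ℕ) (hT : 1 ≤ T) (m n q : Fin T → ℕ)
    (K : ∀ t, Matrix (Fin (m t)) (Fin (n t)) ℝ)
    (L : ∀ t, Matrix (Fin (q t)) (Fin (m t)) ℝ)
    (h : ∀ t, coneV (K t) = coneH (L t)) :
    coneV (kronPi K) ⊆ coneH (kronPi L) := by
  have hLK : ∀ t i j, 0 ≤ (L t * K t) i j := by
    intro t i j
    have hmem : (K t).mulVec (Pi.single j 1) ∈ coneV (K t) :=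
      ⟨Pi.single j 1, Pi.single_nonneg.mpr zero_le_one, rfl⟩
    rw [h t] at hmem
    have := hmem i
    simpa [Matrix.mulVec_mulVec, Matrix.mulVec_single, Matrix.mulVec, dotProduct, Matrix.mul_apply, Matrix.col_apply, Pi.single_apply] using this
  rintro z ⟨v, hv, rfl⟩
  intro r
  rw [Matrix.mulVec_mulVec, kronPi_mul]
  simp only [Matrix.mulVec, dotProduct, kronPi, Matrix.of_apply]
  exact Finset.sum_nonneg fun c _ =>
    mul_nonneg (Finset.prod_nonneg fun t _ => hLK t (r t) (c t)) (hv c)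

end
end

section
/- Let A be a finite RUM matrix with at least one menu, and let ρ be a componentwise nonnegative vector such that, for each menu of A, the entries of ρ over the rows of that menu sum to 1. Then there exists a componentwise nonnegative vector ν with Aν = ρ if and only if for every assignment m of a nonnegative integer m_r to each row r of A, Σ_r m_r ρ_r ≤ max_c Σ_r m_r A_{r,c}, where the maximum is over the columns c of A. -/
open Matrix

noncomputable section

/-- `A` is a RUM matrix with menus given by the fibers of `menu`: the entries of `A`
lie in `{0,1}`, the menus (fibers of `menu`) are nonempty, and every column has
exactly one entry equal to `1` in each menu. -/
def IsRUMMatrix {Row Col M : Type*} (A : Matrix Row Col ℝ) (menu : Row → M) : Prop :=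
  Function.Surjective menu ∧
  (∀ r c, A r c = 0 ∨ A r c = 1) ∧
  (∀ (c : Col) (j : M), ∃! r, menu r = j ∧ A r c = 1)

/-- In a RUM matrix, each column sums to `1` over every menu. -/
lemma rum_menuSum {Row Col M : Type*} [Fintype Row] [DecidableEq M]
    (A : Matrix Row Col ℝ) (menu : Row → M) (hA : IsRUMMatrix A menu) (c : Col) (j : M) :
    ∑ r ∈ Finset.univ.filter (fun r => menu r = j), A r c = 1 := by
  obtain ⟨r₀, ⟨hm0, hv0⟩, huniq⟩ := hA.2.2 c j
  rw [Finset.sum_eq_single_of_mem r₀ (by simp [hm0])]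
  · exact hv0
  · intro r hr hne
    rcases hA.2.1 r c with h | h
    · exact h
    · exact absurd (huniq r ⟨(Finset.mem_filter.mp hr).2, h⟩) hne

/-- In a RUM matrix, each column sums to the number of menus. -/
lemma rum_colSum {Row Col M : Type*} [Fintype Row] [Fintype M] [DecidableEq M]
    (A : Matrix Row Col ℝ) (menu : Row → M) (hA : IsRUMMatrix A menu) (c : Col) :
    ∑ r, A r c = (Fintype.card M : ℝ) := by
  rw [← Finset.sum_fiberwise Finset.univ menu (fun r => A r c)]
  simp [rum_menuSum A menu hA c]

/-- A continuous linear functional on `Row → ℝ` is evaluation against a weight vector. -/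
lemma clm_eval_eq_sum {Row : Type*} [Fintype Row] [DecidableEq Row]
    (f : (Row → ℝ) →L[ℝ] ℝ) (v : Row → ℝ) :
    f v = ∑ r, v r * f (Pi.single r 1) := by
  conv_lhs => rw [← Finset.univ_sum_single v]
  rw [map_sum]
  refine Finset.sum_congr rfl fun r _ => ?_
  have h : Pi.single (M := fun _ : Row => ℝ) r (v r)
      = v r • (Pi.single (M := fun _ : Row => ℝ) r (1:ℝ)) := by
    rw [← Pi.single_smul, smul_eq_mul, mul_one]
  rw [h, _root_.map_smul, smul_eq_mul]

/-- for a finite RUM matrix `A` and a vector `ρ ≥ 0` summing to one over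
every menu, there is a nonnegative `ν` with `A ν = ρ` if and only if the Axiom of Dynamic
Stochastic Revealed Preference holds: for every assignment `m` of nonnegative integer
weights to rows, `Σ_r m_r ρ_r ≤ max_c Σ_r m_r A_{r,c}`. -/
theorem rumMatrix_nonneg_solution_iff_ADSRP
    {Row Col M : Type*} [Fintype Row] [Fintype Col] [Fintype M]
    [DecidableEq M] [Nonempty M] [Nonempty Col]
    (A : Matrix Row Col ℝ) (menu : Row → M) (hA : IsRUMMatrix A menu)
    (ρ : Row → ℝ) (hρ0 : 0 ≤ ρ)
    (hρ1 : ∀ j : M, ∑ r ∈ Finset.univ.filter (fun r => menu r = j), ρ r = 1) :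
    (∃ ν : Col → ℝ, 0 ≤ ν ∧ A.mulVec ν = ρ) ↔
      ∀ mm : Row → ℕ,
        ∑ r, (mm r : ℝ) * ρ r ≤
          Finset.univ.sup' Finset.univ_nonempty (fun c : Col => ∑ r, (mm r : ℝ) * A r c) := by
  classical
  have hAcol : ∀ c, ∑ r, A r c = (Fintype.card M : ℝ) := rum_colSum A menu hA
  have hA01 : ∀ r c, 0 ≤ A r c ∧ A r c ≤ 1 := by
    intro r c
    rcases hA.2.1 r c with h | h <;> simp [h]
  have hρsum : ∑ r, ρ r = (Fintype.card M : ℝ) := by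
    rw [← Finset.sum_fiberwise Finset.univ menu ρ]
    simp [hρ1]
  have hMpos : (0:ℝ) < (Fintype.card M : ℝ) := by
    exact_mod_cast Fintype.card_pos
  constructor
  · rintro ⟨ν, hν0, hνA⟩ mm
    -- the weights ν sum to one
    have hswap : ∑ r, ρ r = (Fintype.card M : ℝ) * ∑ c, ν c := by
      calc ∑ r, ρ r = ∑ r, ∑ c, A r c * ν c := by
            refine Finset.sum_congr rfl fun r _ => ?_
            rw [← hνA]; rfl
        _ = ∑ c, (∑ r, A r c) * ν c := by
            rw [Finset.sum_comm]
            exact Finset.sum_congr rfl fun c _ => by rw [Finset.sum_mul]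
        _ = ∑ c, (Fintype.card M : ℝ) * ν c := by
            exact Finset.sum_congr rfl fun c _ => by rw [hAcol]
        _ = (Fintype.card M : ℝ) * ∑ c, ν c := by rw [Finset.mul_sum]
    have hν1 : ∑ c, ν c = 1 := by
      have h := hswap
      rw [hρsum] at h
      have h' : (Fintype.card M : ℝ) * 1 = (Fintype.card M : ℝ) * ∑ c, ν c := by
        rw [mul_one]; exact h
      exact (mul_left_cancel₀ (ne_of_gt hMpos) h').symm
    -- the weighted sum is a convex combination of the column sums
    set S := Finset.univ.sup' Finset.univ_nonempty (fun c : Col => ∑ r, (mm r : ℝ) * A r c)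
    calc ∑ r, (mm r : ℝ) * ρ r = ∑ r, (mm r : ℝ) * ∑ c, A r c * ν c := by
          refine Finset.sum_congr rfl fun r _ => ?_
          rw [← hνA]; rfl
      _ = ∑ c, ν c * ∑ r, (mm r : ℝ) * A r c := by
          simp_rw [Finset.mul_sum]
          rw [Finset.sum_comm]
          exact Finset.sum_congr rfl fun c _ => Finset.sum_congr rfl fun r _ => by ring
      _ ≤ ∑ c, ν c * S := by
          refine Finset.sum_le_sum fun c _ => ?_
          exact mul_le_mul_of_nonneg_left
            (Finset.le_sup' (fun c : Col => ∑ r, (mm r : ℝ) * A r c) (Finset.mem_univ c))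
            (hν0 c)
      _ = S := by rw [← Finset.sum_mul, hν1, one_mul]
  · intro hADSRP
    by_contra hno
    set g : Col → Row → ℝ := fun c r => A r c with hg
    -- ρ is not in the convex hull of the columns
    have hρhull : ρ ∉ convexHull ℝ (Set.range g) := by
      intro hmem
      rw [convexHull_range_eq_exists_affineCombination] at hmem
      obtain ⟨s, w, hw0, hw1, hcomb⟩ := hmem
      rw [Finset.affineCombination_eq_linear_combination s g w hw1] at hcomb
      refine hno ⟨fun c => if c ∈ s then w c else 0, ?_, ?_⟩
      · intro c
        dsimp
        split
        · exact hw0 _ ‹_›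
        · exact le_refl 0
      · funext r
        have hr : (∑ c ∈ s, w c • g c) r = ρ r := by rw [hcomb]
        rw [Finset.sum_apply] at hr
        calc A.mulVec (fun c => if c ∈ s then w c else 0) r
            = ∑ c, A r c * (if c ∈ s then w c else 0) := rfl
          _ = ∑ c, (if c ∈ s then w c * A r c else 0) := by
              refine Finset.sum_congr rfl fun c _ => ?_
              split <;> ring
          _ = ∑ c ∈ Finset.univ ∩ s, w c * A r c := by rw [Finset.sum_ite_mem]
          _ = ∑ c ∈ s, (w c • g c) r := by rw [Finset.univ_inter]; rfl
          _ = ρ r := hr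
    -- separate ρ from the hull
    have hclosed : IsClosed (convexHull ℝ (Set.range g)) :=
      ((Set.finite_range g).isCompact_convexHull (𝕜 := ℝ)).isClosed
    obtain ⟨f, u, hfa, hfρ⟩ :=
      geometric_hahn_banach_closed_point (convex_convexHull ℝ _) hclosed hρhull
    set y : Row → ℝ := fun r => f (Pi.single r 1) with hy
    have hfy : ∀ v : Row → ℝ, f v = ∑ r, v r * y r := fun v => clm_eval_eq_sum f v
    set δ : ℝ := f ρ - u with hδ
    have hδpos : 0 < δ := by simp [hδ]; linarith
    have hsep : ∀ c, ∑ r, y r * A r c < ∑ r, y r * ρ r - δ := by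
      intro c
      have h1 : f (g c) < u := hfa (g c) (subset_convexHull ℝ _ ⟨c, rfl⟩)
      rw [hfy] at h1
      have h2 : f ρ = ∑ r, y r * ρ r := by
        rw [hfy]; exact Finset.sum_congr rfl fun r _ => mul_comm _ _
      have h3 : ∑ r, y r * A r c = ∑ r, g c r * y r := by
        exact Finset.sum_congr rfl fun r _ => mul_comm _ _
      rw [h3]
      have : u = ∑ r, y r * ρ r - δ := by rw [hδ, h2]; ring
      linarith [h1, this ▸ h1]
    -- shift y to be nonnegative; both sides shift by t * |M|
    set t : ℝ := ∑ r, |y r| with ht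
    set y' : Row → ℝ := fun r => y r + t with hy'
    have hy'0 : ∀ r, 0 ≤ y' r := by
      intro r
      have h1 : |y r| ≤ t :=
        Finset.single_le_sum (f := fun r => |y r|) (fun _ _ => abs_nonneg _) (Finset.mem_univ r)
      have h2 := neg_abs_le (y r)
      simp only [hy']
      linarith
    have hshiftA : ∀ c, ∑ r, y' r * A r c = (∑ r, y r * A r c) + t * (Fintype.card M : ℝ) := by
      intro c
      simp only [hy', add_mul]
      rw [Finset.sum_add_distrib, ← Finset.mul_sum, hAcol]
    have hshiftρ : ∑ r, y' r * ρ r = (∑ r, y r * ρ r) + t * (Fintype.card M : ℝ) := by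
      simp only [hy', add_mul]
      rw [Finset.sum_add_distrib, ← Finset.mul_sum, hρsum]
    have hsep' : ∀ c, ∑ r, y' r * A r c < ∑ r, y' r * ρ r - δ := by
      intro c
      rw [hshiftA, hshiftρ]
      linarith [hsep c]
    -- pick a large integer scale and take ceilings
    obtain ⟨K, hK⟩ := exists_nat_gt (((Fintype.card Row : ℝ) + 1) / δ)
    have hKδ : (Fintype.card Row : ℝ) + 1 < (K : ℝ) * δ := by
      rw [div_lt_iff₀ hδpos] at hK
      linarith
    set mm : Row → ℕ := fun r => ⌈(K : ℝ) * y' r⌉₊ with hmm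
    have hmm_lb : ∀ r, (K : ℝ) * y' r ≤ (mm r : ℝ) := fun r => Nat.le_ceil _
    have hmm_ub : ∀ r, (mm r : ℝ) ≤ (K : ℝ) * y' r + 1 := by
      intro r
      have h0 : 0 ≤ (K : ℝ) * y' r := mul_nonneg (Nat.cast_nonneg _) (hy'0 r)
      exact le_of_lt (Nat.ceil_lt_add_one h0)
    -- lower bound for the weighted ρ-sum
    have hlb : (K : ℝ) * ∑ r, y' r * ρ r ≤ ∑ r, (mm r : ℝ) * ρ r := by
      rw [Finset.mul_sum]
      refine Finset.sum_le_sum fun r _ => ?_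
      rw [← mul_assoc]
      exact mul_le_mul_of_nonneg_right (hmm_lb r) (hρ0 r)
    -- upper bound for each weighted column sum
    have hub : ∀ c, ∑ r, (mm r : ℝ) * A r c
        ≤ (K : ℝ) * (∑ r, y' r * A r c) + (Fintype.card Row : ℝ) := by
      intro c
      calc ∑ r, (mm r : ℝ) * A r c ≤ ∑ r, ((K : ℝ) * y' r + 1) * A r c := by
            refine Finset.sum_le_sum fun r _ => ?_
            exact mul_le_mul_of_nonneg_right (hmm_ub r) (hA01 r c).1
        _ = (K : ℝ) * (∑ r, y' r * A r c) + ∑ r, A r c := by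
            simp only [add_mul, one_mul]
            rw [Finset.sum_add_distrib, Finset.mul_sum]
            congr 1
            exact Finset.sum_congr rfl fun r _ => by ring
        _ ≤ (K : ℝ) * (∑ r, y' r * A r c) + (Fintype.card Row : ℝ) := by
            have h1 : ∑ r, A r c ≤ ∑ r, (1:ℝ) :=
              Finset.sum_le_sum fun r _ => (hA01 r c).2
            simp only [Finset.sum_const, Finset.card_univ, nsmul_eq_mul, mul_one] at h1
            linarith
    -- every weighted column sum is strictly below the weighted ρ-sum
    have hstrict : ∀ c, ∑ r, (mm r : ℝ) * A r c < ∑ r, (mm r : ℝ) * ρ r := by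
      intro c
      have h1 := hsep' c
      have h2 : (K : ℝ) * (∑ r, y' r * A r c) ≤ (K : ℝ) * (∑ r, y' r * ρ r - δ) :=
        mul_le_mul_of_nonneg_left (le_of_lt h1) (Nat.cast_nonneg _)
      have h3 := hub c
      have h4 := hlb
      nlinarith [hKδ]
    have hsup' : Finset.univ.sup' Finset.univ_nonempty
        (fun c : Col => ∑ r, (mm r : ℝ) * A r c) < ∑ r, (mm r : ℝ) * ρ r :=
      (Finset.sup'_lt_iff Finset.univ_nonempty).mpr fun c _ => hstrict c
    linarith [hADSRP mm]

end
end

section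
/- Let A^1,…,A^T be RUM matrices and suppose ρ = (⊗_{t=1}^T A^t) ν for some componentwise nonnegative vector ν, where ρ is indexed by tuples (r_1,…,r_T) of row indices of A^1,…,A^T via the lexicographic bijection of indices. Then ρ is stable. -/
open Matrix

noncomputable section

/-- A vector `ρ` indexed by tuples of rows is stable: for every period `t`, every pair of
menus `j, j'` of period `t`, and every fixed tuple of rows in the other periods, the sum
of `ρ` over the rows of menu `j` in position `t` equals the sum over the rows of `j'`. -/
def IsStable {T : ℕ} {Row : Fin T → Type*} [∀ t, Fintype (Row t)]
    {M : Fin T → Type*} [∀ t, DecidableEq (M t)]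
    (menu : ∀ t, Row t → M t) (ρ : (∀ t, Row t) → ℝ) : Prop :=
  ∀ (t : Fin T) (j j' : M t) (r : ∀ s, Row s),
    ∑ x ∈ Finset.univ.filter (fun x => menu t x = j), ρ (Function.update r t x) =
      ∑ x ∈ Finset.univ.filter (fun x => menu t x = j'), ρ (Function.update r t x)

/-- if `ρ = (⊗ₜ Aᵗ) ν` for some nonnegative `ν` and RUM matrices `Aᵗ`,
then `ρ` is stable. -/
theorem kron_rum_nonneg_solution_isStable
    (T : ℕ) {Row Col M : Fin T → Type*}
    [∀ t, Fintype (Row t)] [∀ t, Fintype (Col t)] [∀ t, DecidableEq (M t)]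
    (A : ∀ t, Matrix (Row t) (Col t) ℝ) (menu : ∀ t, Row t → M t)
    (hA : ∀ t, IsRUMMatrix (A t) (menu t))
    (ν : (∀ t, Col t) → ℝ) (hν : 0 ≤ ν)
    (ρ : (∀ t, Row t) → ℝ) (hρ : (kronPi A).mulVec ν = ρ) :
    IsStable menu ρ := by
  -- key lemma: in each column, the sum of entries over a menu is 1
  have key : ∀ (t : Fin T) (j : M t) (c : Col t),
      ∑ x ∈ Finset.univ.filter (fun x => menu t x = j), A t x c = 1 := by
    intro t j c
    obtain ⟨-, h01, huniq⟩ := hA t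
    obtain ⟨r0, ⟨hm0, h10⟩, hu⟩ := huniq c j
    rw [Finset.sum_eq_single_of_mem r0]
    · exact h10
    · simp [hm0]
    · intro x hx hne
      rcases h01 x c with h | h
      · exact h
      · exact absurd (hu x ⟨(Finset.mem_filter.mp hx).2, h⟩) hne
  intro t j j' r
  subst hρ
  have main : ∀ (j : M t),
      ∑ x ∈ Finset.univ.filter (fun x => menu t x = j),
        (kronPi A).mulVec ν (Function.update r t x) =
      ∑ c : (∀ s, Col s), (∏ s ∈ Finset.univ.erase t, A s (r s) (c s)) * ν c := by
    intro j
    simp only [Matrix.mulVec, dotProduct, kronPi, Matrix.of_apply]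
    rw [Finset.sum_comm]
    refine Finset.sum_congr rfl fun c _ => ?_
    have hprod : ∀ x : Row t,
        (∏ s, A s (Function.update r t x s) (c s)) =
          A t x (c t) * ∏ s ∈ Finset.univ.erase t, A s (r s) (c s) := by
      intro x
      rw [← Finset.mul_prod_erase Finset.univ _ (Finset.mem_univ t)]
      congr 1
      · simp
      · exact Finset.prod_congr rfl fun s hs => by
          rw [Function.update_of_ne (Finset.ne_of_mem_erase hs)]
    simp only [hprod]
    rw [← Finset.sum_mul, ← Finset.sum_mul, key t j (c t), one_mul]
  rw [main j, main j']

end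
end

section
/- Let T ≥ 1 and let A be the 4×3 matrix with rows (1,1,0), (0,0,1), (1,0,0), (0,1,1), where rows 1 and 2 form menu 1 and rows 3 and 4 form menu 2. Let ρ : {1,2,3,4}^T → ℝ be nonnegative and satisfy, for every (j_1,…,j_T) ∈ {1,2}^T, Σ ρ(r_1,…,r_T) = 1 where the sum is over all tuples with r_t ∈ {1,2} if j_t = 1 and r_t ∈ {3,4} if j_t = 2. Then the following are equivalent: (i) there exists ν ∈ ℝ^{3^T} with ν ≥ 0 and A^{⊗T} ν = ρ, where A^{⊗T} is the T-fold Kronecker power of A and ρ is viewed as a vector in ℝ^{4^T} via the lexicographic identification; (ii) ρ is stable and D-monotone; (iii) ρ is stable and H^{⊗T} ρ ≥ 0, where H is the 4×4 matrix with rows (1,0,−1,0), (1,0,0,0), (0,1,0,0), (0,0,1,0). -/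
open Matrix

noncomputable section

/-- The `V`-representation matrix of the simple setup (two intersecting budgets,
three rational types); rows `0,1` form menu `1` and rows `2,3` form menu `2`. -/
def Asimple : Matrix (Fin 4) (Fin 3) ℝ :=
  !![1, 1, 0; 0, 0, 1; 1, 0, 0; 0, 1, 1]

/-- The `H`-representation matrix of static RUM in the simple setup. -/
def Hsimple : Matrix (Fin 4) (Fin 4) ℝ :=
  !![1, 0, -1, 0; 1, 0, 0, 0; 0, 1, 0, 0; 0, 0, 1, 0]

/-- The menu of each row: rows `0,1` belong to menu `0`, rows `2,3` to menu `1`. -/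
def menuSimple : Fin 4 → Fin 2 := ![0, 0, 1, 1]

/-- Replacement of dominated patches by dominant ones: row `3` (index 2) is replaced by
row `1` (index 0), and row `2` (index 1) is replaced by row `4` (index 3). -/
def repSimple : Fin 4 → Fin 4 := ![0, 3, 0, 3]

/-- Stability in the simple setup: replacing the period-`t` entry, the probability mass of
menu `1` equals that of menu `2`. -/
def StableSimple (T : ℕ) (ρ : (Fin T → Fin 4) → ℝ) : Prop :=
  ∀ (t : Fin T) (r : Fin T → Fin 4),
    ρ (Function.update r t 0) + ρ (Function.update r t 1) =
      ρ (Function.update r t 2) + ρ (Function.update r t 3)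

/-- `D`-monotonicity in the simple setup: for every nonempty set `S` of periods and every
tuple `r` whose entries on `S` are dominated patches (rows `2` or `3`, i.e. indices `1,2`),
the alternating sum over replacements by the dominant patches is nonnegative. -/
def DMonotoneSimple (T : ℕ) (ρ : (Fin T → Fin 4) → ℝ) : Prop :=
  ∀ S : Finset (Fin T), S.Nonempty → ∀ r : Fin T → Fin 4,
    (∀ t ∈ S, r t = 1 ∨ r t = 2) →
    0 ≤ ∑ E ∈ S.powerset, (-1 : ℝ) ^ ((S \ E).card) *
      ρ (fun t => if t ∈ E then repSimple (r t) else r t)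

def Bsimple : Matrix (Fin 3) (Fin 4) ℝ := !![0,0,1,0; 1,0,-1,0; 0,1,0,0]

def succ4 : Fin 4 → Fin 4 := ![1, 2, 3, 0]

def pred4 : Fin 4 → Fin 4 := ![0, 0, 1, 2]

def emb34 : Fin 3 → Fin 4 := ![3, 0, 2]

def Kv {T m n : ℕ} (C : Matrix (Fin m) (Fin n) ℝ) (ν : (Fin T → Fin n) → ℝ) :
    (Fin T → Fin m) → ℝ := (kronPi fun _ : Fin T => C).mulVec ν

lemma Kv_apply {T m n : ℕ} (C : Matrix (Fin m) (Fin n) ℝ) (ν : (Fin T → Fin n) → ℝ)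
    (r : Fin T → Fin m) :
    Kv C ν r = ∑ c : Fin T → Fin n, (∏ t, C (r t) (c t)) * ν c := rfl

lemma prod_update_row {T m n : ℕ} (C : Matrix (Fin m) (Fin n) ℝ) (r : Fin T → Fin m)
    (c : Fin T → Fin n) (t : Fin T) (v : Fin m) :
    (∏ s, C (Function.update r t v s) (c s)) =
      C v (c t) * ∏ s ∈ Finset.univ.erase t, C (r s) (c s) := by
  have h : (fun s => C (Function.update r t v s) (c s)) =
      Function.update (fun s => C (r s) (c s)) t (C v (c t)) := by
    funext s
    rcases eq_or_ne s t with h | h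
    · subst h; simp
    · simp [Function.update_of_ne h]
  rw [h, Finset.prod_update_of_mem (Finset.mem_univ t), Finset.sdiff_singleton_eq_erase]

lemma Kv_update_linear {T m n : ℕ} (C : Matrix (Fin m) (Fin n) ℝ) (ν : (Fin T → Fin n) → ℝ)
    (r : Fin T → Fin m) (t : Fin T) (a b c d : Fin m) (cb cc cd : ℝ)
    (h : ∀ j, C a j = cb * C b j + cc * C c j + cd * C d j) :
    Kv C ν (Function.update r t a) =
      cb * Kv C ν (Function.update r t b) + cc * Kv C ν (Function.update r t c)
        + cd * Kv C ν (Function.update r t d) := by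
  simp only [Kv_apply, prod_update_row, Finset.mul_sum, ← Finset.sum_add_distrib]
  exact Finset.sum_congr rfl fun x _ => by rw [h (x t)]; ring

lemma Kv_delta {T m n : ℕ} (C : Matrix (Fin m) (Fin n) ℝ) (ν : (Fin T → Fin n) → ℝ)
    (r : Fin T → Fin m) (y : Fin T → Fin n) (h : ∀ t j, C (r t) j = if j = y t then 1 else 0) :
    Kv C ν r = ν y := by
  rw [Kv_apply]
  have key : ∀ c : Fin T → Fin n, (∏ t, C (r t) (c t)) = if c = y then 1 else 0 := by
    intro c
    simp only [h]
    rw [Fintype.prod_boole]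
    congr 1
    simp [funext_iff]
  simp only [key, ite_mul, one_mul, zero_mul]
  simp

lemma Kv_comp {T a b c : ℕ} (M : Matrix (Fin a) (Fin b) ℝ) (N : Matrix (Fin b) (Fin c) ℝ)
    (ν : (Fin T → Fin c) → ℝ) : Kv M (Kv N ν) = Kv (M * N) ν := by
  funext r
  simp only [Kv_apply]
  have key : ∀ y : Fin T → Fin c,
      (∑ x : Fin T → Fin b, (∏ t, M (r t) (x t)) * ∏ t, N (x t) (y t))
        = ∏ t, (M * N) (r t) (y t) := by
    intro y
    simp only [Matrix.mul_apply]
    rw [Finset.prod_univ_sum, Fintype.piFinset_univ]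
    exact Finset.sum_congr rfl fun x _ => by rw [← Finset.prod_mul_distrib]
  have swap : (∑ x : Fin T → Fin b, (∏ t, M (r t) (x t)) *
        ∑ y : Fin T → Fin c, (∏ t, N (x t) (y t)) * ν y)
      = ∑ y : Fin T → Fin c,
          (∑ x : Fin T → Fin b, (∏ t, M (r t) (x t)) * ∏ t, N (x t) (y t)) * ν y := by
    simp only [Finset.mul_sum, Finset.sum_mul]
    rw [Finset.sum_comm]
    exact Finset.sum_congr rfl fun y _ => Finset.sum_congr rfl fun x _ => by ring
  rw [swap]
  exact Finset.sum_congr rfl fun y _ => by rw [key y]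

def Dsum {T : ℕ} (ρ : (Fin T → Fin 4) → ℝ) (S : Finset (Fin T)) (r : Fin T → Fin 4) : ℝ :=
  ∑ E ∈ S.powerset, (-1 : ℝ) ^ ((S \ E).card) *
    ρ (fun t => if t ∈ E then repSimple (r t) else r t)

lemma Dsum_empty {T : ℕ} (ρ : (Fin T → Fin 4) → ℝ) (r : Fin T → Fin 4) :
    Dsum ρ ∅ r = ρ r := by
  simp [Dsum]

lemma Dsum_insert {T : ℕ} (ρ : (Fin T → Fin 4) → ℝ) {S : Finset (Fin T)} {t : Fin T}
    (ht : t ∉ S) (r : Fin T → Fin 4) :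
    Dsum ρ (insert t S) r =
      Dsum ρ S (Function.update r t (repSimple (r t))) - Dsum ρ S r := by
  unfold Dsum
  rw [Finset.sum_powerset_insert ht]
  have h1 : ∀ E ∈ S.powerset,
      (-1 : ℝ) ^ ((insert t S \ E).card) *
          ρ (fun s => if s ∈ E then repSimple (r s) else r s)
        = -((-1 : ℝ) ^ ((S \ E).card) *
          ρ (fun s => if s ∈ E then repSimple (r s) else r s)) := by
    intro E hE
    have hE' := Finset.mem_powerset.1 hE
    have htE : t ∉ E := fun h => ht (hE' h)
    have hins : insert t S \ E = insert t (S \ E) := by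
      ext s
      simp only [Finset.mem_sdiff, Finset.mem_insert]
      constructor
      · rintro ⟨h | h, h2⟩
        · exact Or.inl h
        · exact Or.inr ⟨h, h2⟩
      · rintro (h | ⟨h, h2⟩)
        · exact ⟨Or.inl h, h ▸ htE⟩
        · exact ⟨Or.inr h, h2⟩
    have htSE : t ∉ S \ E := fun h => ht (Finset.mem_sdiff.1 h).1
    rw [hins, Finset.card_insert_of_notMem htSE, pow_succ]
    ring
  have h2 : ∀ E ∈ S.powerset,
      (-1 : ℝ) ^ ((insert t S \ insert t E).card) *
          ρ (fun s => if s ∈ insert t E then repSimple (r s) else r s)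
        = (-1 : ℝ) ^ ((S \ E).card) *
          ρ (fun s => if s ∈ E then repSimple ((Function.update r t (repSimple (r t))) s)
              else (Function.update r t (repSimple (r t))) s) := by
    intro E hE
    have hE' := Finset.mem_powerset.1 hE
    have hsd : insert t S \ insert t E = S \ E := by
      ext s
      simp only [Finset.mem_sdiff, Finset.mem_insert, not_or]
      constructor
      · rintro ⟨h | h, h1, h2⟩
        · exact absurd h h1
        · exact ⟨h, h2⟩
      · rintro ⟨h, h2⟩
        exact ⟨Or.inr h, fun he => ht (he ▸ h), h2⟩
    have hfun : (fun s => if s ∈ insert t E then repSimple (r s) else r s)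
        = (fun s => if s ∈ E then repSimple ((Function.update r t (repSimple (r t))) s)
            else (Function.update r t (repSimple (r t))) s) := by
      funext s
      rcases eq_or_ne s t with h | h
      · subst h
        have hsE : s ∉ E := fun h => ht (hE' h)
        simp [hsE]
      · simp [Function.update_of_ne h, Finset.mem_insert, h]
    rw [hsd, hfun]
  rw [Finset.sum_congr rfl h1, Finset.sum_congr rfl h2, Finset.sum_neg_distrib]
  ring

lemma Dsum_update3 {T : ℕ} {ρ : (Fin T → Fin 4) → ℝ} (hst : StableSimple T ρ)
    {S : Finset (Fin T)} {t : Fin T} (ht : t ∉ S) (r : Fin T → Fin 4) :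
    Dsum ρ S (Function.update r t 3) =
      Dsum ρ S (Function.update r t 0) + Dsum ρ S (Function.update r t 1)
        - Dsum ρ S (Function.update r t 2) := by
  unfold Dsum
  rw [← Finset.sum_add_distrib, ← Finset.sum_sub_distrib]
  refine Finset.sum_congr rfl fun E hE => ?_
  have hE' := Finset.mem_powerset.1 hE
  have htE : t ∉ E := fun h => ht (hE' h)
  have key : ∀ v : Fin 4,
      (fun s => if s ∈ E then repSimple (Function.update r t v s) else Function.update r t v s)
        = Function.update (fun s => if s ∈ E then repSimple (r s) else r s) t v := by
    intro v
    funext s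
    rcases eq_or_ne s t with h | h
    · subst h; simp [htE]
    · simp [Function.update_of_ne h]
  simp only [key]
  have hs := hst t (fun s => if s ∈ E then repSimple (r s) else r s)
  linear_combination (-(-1 : ℝ) ^ ((S \ E).card)) * hs

lemma Dsum_swap12 {T : ℕ} {ρ : (Fin T → Fin 4) → ℝ} (hst : StableSimple T ρ)
    {S : Finset (Fin T)} {t : Fin T} (ht : t ∈ S) (r : Fin T → Fin 4) :
    Dsum ρ S (Function.update r t 1) = Dsum ρ S (Function.update r t 2) := by
  have ht' : t ∉ S.erase t := Finset.notMem_erase t S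
  have hS : insert t (S.erase t) = S := Finset.insert_erase ht
  have e1 := Dsum_insert ρ ht' (Function.update r t 1)
  have e2 := Dsum_insert ρ ht' (Function.update r t 2)
  rw [hS] at e1 e2
  simp only [Function.update_self, Function.update_idem] at e1 e2
  have hrep1 : repSimple 1 = 3 := by decide
  have hrep2 : repSimple 2 = 0 := by decide
  rw [hrep1] at e1
  rw [hrep2] at e2
  have h3 := Dsum_update3 hst ht' r
  linarith

lemma Hrow_delta : ∀ k : Fin 4, k ≠ 3 → ∀ j, Hsimple (succ4 k) j = if j = k then 1 else 0 := by
  intro k hk j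
  fin_cases k <;> fin_cases j <;>
    simp_all [Hsimple, succ4, Matrix.vecHead, Matrix.vecTail] <;> norm_num

lemma Hrow_split : ∀ j, Hsimple 0 j = 1 * Hsimple 1 j + (-1) * Hsimple 3 j + 0 * Hsimple 0 j := by
  intro j; fin_cases j <;> norm_num [Hsimple, Matrix.vecHead, Matrix.vecTail, Matrix.cons_val_two, Matrix.cons_val_three, Matrix.cons_val_one]

lemma Dsum_eq_Kv {T : ℕ} (ρ : (Fin T → Fin 4) → ℝ) :
    ∀ (S : Finset (Fin T)) (r : Fin T → Fin 4), (∀ t ∈ S, r t = 2) → (∀ t ∉ S, r t ≠ 3) →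
      Dsum ρ S r = Kv Hsimple ρ (fun s => if s ∈ S then 0 else succ4 (r s)) := by
  intro S
  induction S using Finset.induction_on with
  | empty =>
    intro r _ h3
    rw [Dsum_empty]
    rw [Kv_delta Hsimple ρ _ r (fun t j => by simpa using Hrow_delta (r t) (h3 t (by simp)) j)]
  | insert t S' ht IH =>
    intro r h2 h3
    have hrt : r t = 2 := h2 t (Finset.mem_insert_self t S')
    have hrep : repSimple (r t) = 0 := by rw [hrt]; decide
    rw [Dsum_insert ρ ht r, hrep]
    have c2a : ∀ s ∈ S', Function.update r t 0 s = 2 := fun s hs => by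
      rw [Function.update_of_ne (fun h : s = t => ht (by rwa [h] at hs))]
      exact h2 s (Finset.mem_insert_of_mem hs)
    have c3a : ∀ s ∉ S', Function.update r t 0 s ≠ 3 := by
      intro s hs
      rcases eq_or_ne s t with h | h
      · subst h; simp
      · rw [Function.update_of_ne h]
        exact h3 s (by simp [Finset.mem_insert, h, hs])
    have c2b : ∀ s ∈ S', r s = 2 := fun s hs => h2 s (Finset.mem_insert_of_mem hs)
    have c3b : ∀ s ∉ S', r s ≠ 3 := by
      intro s hs
      rcases eq_or_ne s t with h | h
      · subst h; rw [hrt]; decide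
      · exact h3 s (by simp [Finset.mem_insert, h, hs])
    rw [IH _ c2a c3a, IH _ c2b c3b]
    set y : Fin T → Fin 4 := fun s => if s ∈ insert t S' then 0 else succ4 (r s) with hy
    have hy1 : (fun s => if s ∈ S' then 0 else succ4 (Function.update r t 0 s))
        = Function.update y t 1 := by
      funext s
      rcases eq_or_ne s t with h | h
      · subst h; simp [ht, succ4]
      · simp [Function.update_of_ne h, hy, Finset.mem_insert, h]
    have hy3 : (fun s => if s ∈ S' then 0 else succ4 (r s)) = Function.update y t 3 := by
      funext s
      rcases eq_or_ne s t with h | h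
      · subst h; simp [ht, hrt, succ4]
      · simp [Function.update_of_ne h, hy, Finset.mem_insert, h]
    have hy0 : y = Function.update y t 0 := by
      have : y t = 0 := by simp [hy]
      rw [← this, Function.update_eq_self]
    rw [hy1, hy3]
    have h0 : Kv Hsimple ρ y = Kv Hsimple ρ (Function.update y t 0) := by
      conv_lhs => rw [hy0]
    have hlin := Kv_update_linear Hsimple ρ y t 0 1 3 0 1 (-1) 0 Hrow_split
    linarith

lemma card_lt_of_subset_erase {α : Type*} [DecidableEq α] {A B : Finset α} {t : α}
    (h : A ⊆ B.erase t) (ht : t ∈ B) : A.card < B.card :=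
  lt_of_le_of_lt (Finset.card_le_card h) (Finset.card_erase_lt_of_mem ht)

lemma Dsum_base_nonneg {T : ℕ} {ρ : (Fin T → Fin 4) → ℝ}
    (hH : 0 ≤ Kv Hsimple ρ) (S : Finset (Fin T)) (r : Fin T → Fin 4)
    (h2 : ∀ s ∈ S, r s = 2) (h3 : ∀ s ∉ S, r s ≠ 3) : 0 ≤ Dsum ρ S r := by
  rw [Dsum_eq_Kv ρ S r h2 h3]
  exact hH _

lemma Dsum_nonneg_of_H {T : ℕ} {ρ : (Fin T → Fin 4) → ℝ}
    (hst : StableSimple T ρ) (hH : 0 ≤ Kv Hsimple ρ) :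
    ∀ (n : ℕ) (S : Finset (Fin T)) (r : Fin T → Fin 4),
      2 * (Finset.univ.filter fun s => s ∉ S ∧ r s = 3).card +
        (Finset.univ.filter fun s => s ∈ S ∧ r s = 1).card ≤ n →
      (∀ s ∈ S, r s = 1 ∨ r s = 2) → 0 ≤ Dsum ρ S r := by
  intro n
  induction n with
  | zero =>
    intro S r hm hcond
    have hf3 : (Finset.univ.filter fun s => s ∉ S ∧ r s = 3) = ∅ :=
      Finset.card_eq_zero.1 (by omega)
    have hf1 : (Finset.univ.filter fun s => s ∈ S ∧ r s = 1) = ∅ :=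
      Finset.card_eq_zero.1 (by omega)
    refine Dsum_base_nonneg hH S r (fun s hs => ?_) (fun s hs => ?_)
    · rcases hcond s hs with h | h
      · exfalso
        have hmem : s ∈ (Finset.univ.filter fun s => s ∈ S ∧ r s = 1) :=
          Finset.mem_filter.2 ⟨Finset.mem_univ s, hs, h⟩
        rw [hf1] at hmem
        exact Finset.notMem_empty s hmem
      · exact h
    · intro h
      have hmem : s ∈ (Finset.univ.filter fun s => s ∉ S ∧ r s = 3) :=
        Finset.mem_filter.2 ⟨Finset.mem_univ s, hs, h⟩
      rw [hf3] at hmem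
      exact Finset.notMem_empty s hmem
  | succ n IH =>
    intro S r hm hcond
    by_cases h1 : ∃ s ∈ S, r s = 1
    · obtain ⟨t, htS, ht1⟩ := h1
      have hr : Function.update r t 1 = r := by rw [← ht1]; exact Function.update_eq_self t r
      have hsw := Dsum_swap12 hst htS r
      rw [hr] at hsw
      rw [hsw]
      refine IH S (Function.update r t 2) ?_ ?_
      · have s3 : (Finset.univ.filter fun s => s ∉ S ∧ Function.update r t 2 s = 3) ⊆
            (Finset.univ.filter fun s => s ∉ S ∧ r s = 3) := by
          intro s hs
          simp only [Finset.mem_filter, Finset.mem_univ, true_and] at hs ⊢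
          rcases eq_or_ne s t with h | h
          · exact absurd htS (h ▸ hs.1)
          · rwa [Function.update_of_ne h] at hs
        have s1 : (Finset.univ.filter fun s => s ∈ S ∧ Function.update r t 2 s = 1) ⊆
            (Finset.univ.filter fun s => s ∈ S ∧ r s = 1).erase t := by
          intro s hs
          simp only [Finset.mem_filter, Finset.mem_univ, true_and, Finset.mem_erase] at hs ⊢
          rcases eq_or_ne s t with h | h
          · subst h; simp at hs
          · rw [Function.update_of_ne h] at hs
            exact ⟨h, hs⟩
        have ht' : t ∈ (Finset.univ.filter fun s => s ∈ S ∧ r s = 1) := by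
          simp [htS, ht1]
        have c1 := card_lt_of_subset_erase s1 ht'
        have c3 := Finset.card_le_card s3
        omega
      · intro s hs
        rcases eq_or_ne s t with h | h
        · subst h; simp
        · rw [Function.update_of_ne h]; exact hcond s hs
    · by_cases h3 : ∃ s, s ∉ S ∧ r s = 3
      · obtain ⟨t, htS, ht3⟩ := h3
        have hr : Function.update r t 3 = r := by rw [← ht3]; exact Function.update_eq_self t r
        have e3 := Dsum_update3 hst htS r
        rw [hr] at e3
        have ei := Dsum_insert ρ htS (Function.update r t 2)
        simp only [Function.update_self, Function.update_idem] at ei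
        have hrep : repSimple 2 = 0 := by decide
        rw [hrep] at ei
        have ht3' : t ∈ (Finset.univ.filter fun s => s ∉ S ∧ r s = 3) := by
          simp [htS, ht3]
        have hA : 0 ≤ Dsum ρ (insert t S) (Function.update r t 2) := by
          refine IH _ _ ?_ ?_
          · have s3 : (Finset.univ.filter fun s => s ∉ insert t S ∧ Function.update r t 2 s = 3) ⊆
                (Finset.univ.filter fun s => s ∉ S ∧ r s = 3).erase t := by
              intro s hs
              simp only [Finset.mem_filter, Finset.mem_univ, true_and, Finset.mem_erase,
                Finset.mem_insert, not_or] at hs ⊢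
              rw [Function.update_of_ne hs.1.1] at hs
              exact ⟨hs.1.1, hs.1.2, hs.2⟩
            have s1 : (Finset.univ.filter fun s => s ∈ insert t S ∧
                Function.update r t 2 s = 1) = ∅ := by
              refine Finset.eq_empty_of_forall_notMem fun s hs => ?_
              simp only [Finset.mem_filter, Finset.mem_univ, true_and,
                Finset.mem_insert] at hs
              rcases eq_or_ne s t with h | h
              · subst h; simp at hs
              · rw [Function.update_of_ne h] at hs
                rcases hs.1 with h' | h'
                · exact h h'
                · exact h1 ⟨s, h', hs.2⟩
            have c3 := card_lt_of_subset_erase s3 ht3'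
            rw [s1]
            simp only [Finset.card_empty]
            omega
          · intro s hs
            rcases eq_or_ne s t with h | h
            · subst h; simp
            · rw [Function.update_of_ne h]
              exact hcond s ((Finset.mem_insert.1 hs).resolve_left h)
        have hB : 0 ≤ Dsum ρ S (Function.update r t 1) := by
          refine IH _ _ ?_ ?_
          · have s3 : (Finset.univ.filter fun s => s ∉ S ∧ Function.update r t 1 s = 3) ⊆
                (Finset.univ.filter fun s => s ∉ S ∧ r s = 3).erase t := by
              intro s hs
              simp only [Finset.mem_filter, Finset.mem_univ, true_and, Finset.mem_erase] at hs ⊢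
              rcases eq_or_ne s t with h | h
              · subst h; simp at hs
              · rw [Function.update_of_ne h] at hs
                exact ⟨h, hs⟩
            have s1 : (Finset.univ.filter fun s => s ∈ S ∧ Function.update r t 1 s = 1) = ∅ := by
              refine Finset.eq_empty_of_forall_notMem fun s hs => ?_
              simp only [Finset.mem_filter, Finset.mem_univ, true_and] at hs
              rcases eq_or_ne s t with h | h
              · subst h; exact htS hs.1
              · rw [Function.update_of_ne h] at hs
                exact h1 ⟨s, hs.1, hs.2⟩
            have c3 := card_lt_of_subset_erase s3 ht3'
            rw [s1]
            simp only [Finset.card_empty]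
            omega
          · intro s hs
            rcases eq_or_ne s t with h | h
            · subst h; exact absurd hs htS
            · rw [Function.update_of_ne h]; exact hcond s hs
        linarith
      · push_neg at h1 h3
        refine Dsum_base_nonneg hH S r (fun s hs => ?_) (fun s hs => h3 s hs)
        rcases hcond s hs with h | h
        · exact absurd h (h1 s hs)
        · exact h

lemma pred4_ne3 : ∀ k : Fin 4, pred4 k ≠ 3 := by decide

lemma succ4_pred4 : ∀ k : Fin 4, k ≠ 0 → succ4 (pred4 k) = k := by decide

lemma H_nonneg_of_DMon {T : ℕ} {ρ : (Fin T → Fin 4) → ℝ} (hρ0 : 0 ≤ ρ)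
    (hD : DMonotoneSimple T ρ) : 0 ≤ Kv Hsimple ρ := by
  refine Pi.le_def.2 fun r => ?_
  rw [Pi.zero_apply]
  classical
  set S : Finset (Fin T) := Finset.univ.filter (fun t => r t = 0) with hS
  set r' : Fin T → Fin 4 := fun t => if r t = 0 then 2 else pred4 (r t) with hr'
  have h2 : ∀ t ∈ S, r' t = 2 := by
    intro t ht
    rw [hS, Finset.mem_filter] at ht
    simp [hr', ht.2]
  have h3 : ∀ t ∉ S, r' t ≠ 3 := by
    intro t ht
    rw [hS, Finset.mem_filter] at ht
    have h0 : ¬ r t = 0 := fun h => ht ⟨Finset.mem_univ t, h⟩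
    simp only [hr', h0, if_false]
    exact pred4_ne3 (r t)
  have key : Dsum ρ S r' = Kv Hsimple ρ r := by
    rw [Dsum_eq_Kv ρ S r' h2 h3]
    congr 1
    funext s
    by_cases h : r s = 0
    · simp [hS, h]
    · have hs : s ∉ S := by simp [hS, h]
      simp only [hs, if_false, hr', h, succ4_pred4 (r s) h]
  rcases S.eq_empty_or_nonempty with hSe | hSne
  · rw [← key, hSe, Dsum_empty]
    exact hρ0 r'
  · rw [← key]
    exact hD S hSne r' (fun t ht => Or.inr (h2 t ht))

lemma Arow_split : ∀ j, Asimple 3 j = 1 * Asimple 0 j + 1 * Asimple 1 j + (-1) * Asimple 2 j := by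
  intro j; fin_cases j <;> norm_num [Asimple, Matrix.vecHead, Matrix.vecTail, Matrix.cons_val_two, Matrix.cons_val_three, Matrix.cons_val_one]

lemma stable_of_rep {T : ℕ} (ν : (Fin T → Fin 3) → ℝ) : StableSimple T (Kv Asimple ν) := by
  intro t r
  have h := Kv_update_linear Asimple ν r t 3 0 1 2 1 1 (-1) Arow_split
  linarith

lemma HA_nonneg : ∀ i j, 0 ≤ (Hsimple * Asimple) i j := by
  intro i j
  fin_cases i <;> fin_cases j <;>
    norm_num [Matrix.mul_apply, Hsimple, Asimple, Fin.sum_univ_four,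
      Matrix.vecHead, Matrix.vecTail, Matrix.cons_val_two, Matrix.cons_val_three, Matrix.cons_val_one]

lemma H_nonneg_of_rep {T : ℕ} {ν : (Fin T → Fin 3) → ℝ} (hν : 0 ≤ ν) :
    0 ≤ Kv Hsimple (Kv Asimple ν : (Fin T → Fin 4) → ℝ) := by
  rw [Kv_comp]
  refine Pi.le_def.2 fun r => ?_
  rw [Pi.zero_apply, Kv_apply]
  exact Finset.sum_nonneg fun c _ =>
    mul_nonneg (Finset.prod_nonneg fun t _ => HA_nonneg _ _) (hν c)

lemma AB_delta : ∀ k : Fin 4, k ≠ 3 → ∀ j, (Asimple * Bsimple) k j = if j = k then 1 else 0 := by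
  intro k hk j
  fin_cases k <;> fin_cases j <;>
    simp_all [Matrix.mul_apply, Asimple, Bsimple, Fin.sum_univ_three,
      Matrix.vecHead, Matrix.vecTail] <;> norm_num

lemma AB_split : ∀ j, (Asimple * Bsimple) 3 j =
    1 * (Asimple * Bsimple) 0 j + 1 * (Asimple * Bsimple) 1 j + (-1) * (Asimple * Bsimple) 2 j := by
  intro j
  fin_cases j <;>
    norm_num [Matrix.mul_apply, Asimple, Bsimple, Fin.sum_univ_three,
      Matrix.vecHead, Matrix.vecTail, Matrix.cons_val_two, Matrix.cons_val_three, Matrix.cons_val_one]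

lemma KvAB_eq {T : ℕ} {ρ : (Fin T → Fin 4) → ℝ} (hst : StableSimple T ρ) :
    ∀ (n : ℕ) (r : Fin T → Fin 4), (Finset.univ.filter fun t => r t = 3).card ≤ n →
      Kv (Asimple * Bsimple) ρ r = ρ r := by
  intro n
  induction n with
  | zero =>
    intro r h
    have hf : (Finset.univ.filter fun t => r t = 3) = ∅ := Finset.card_eq_zero.1 (by omega)
    have h3 : ∀ t, r t ≠ 3 := by
      intro t ht
      have : t ∈ (Finset.univ.filter fun t => r t = 3) := by simp [ht]
      rw [hf] at this
      exact Finset.notMem_empty t this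
    exact Kv_delta _ ρ r r (fun t j => AB_delta (r t) (h3 t) j)
  | succ n IH =>
    intro r h
    by_cases hx : ∃ t, r t = 3
    · obtain ⟨t, ht⟩ := hx
      have hr : Function.update r t 3 = r := by rw [← ht]; exact Function.update_eq_self t r
      have hsplit := Kv_update_linear (Asimple * Bsimple) ρ r t 3 0 1 2 1 1 (-1) AB_split
      rw [hr] at hsplit
      have hb : ∀ v : Fin 4, v ≠ 3 →
          (Finset.univ.filter fun s => Function.update r t v s = 3).card ≤ n := by
        intro v hv
        have hsub : (Finset.univ.filter fun s => Function.update r t v s = 3) ⊆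
            (Finset.univ.filter fun s => r s = 3).erase t := by
          intro s hs
          simp only [Finset.mem_filter, Finset.mem_univ, true_and, Finset.mem_erase] at hs ⊢
          rcases eq_or_ne s t with h' | h'
          · subst h'; rw [Function.update_self] at hs; exact absurd hs hv
          · rw [Function.update_of_ne h'] at hs
            exact ⟨h', hs⟩
        have ht' : t ∈ (Finset.univ.filter fun s => r s = 3) := by simp [ht]
        have := card_lt_of_subset_erase hsub ht'
        omega
      rw [hsplit, IH _ (hb 0 (by decide)), IH _ (hb 1 (by decide)), IH _ (hb 2 (by decide))]
      have hs := hst t r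
      rw [hr] at hs
      linarith
    · push_neg at hx
      exact Kv_delta _ ρ r r (fun t j => AB_delta (r t) (hx t) j)

lemma B_eq_H : ∀ i j, Bsimple i j = Hsimple (emb34 i) j := by
  intro i j
  fin_cases i <;> fin_cases j <;>
    norm_num [Bsimple, Hsimple, emb34, Matrix.vecHead, Matrix.vecTail, Matrix.cons_val_two, Matrix.cons_val_three, Matrix.cons_val_one]

lemma Bv_eq_H {T : ℕ} (ρ : (Fin T → Fin 4) → ℝ) (c : Fin T → Fin 3) :
    Kv Bsimple ρ c = Kv Hsimple ρ (emb34 ∘ c) := by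
  rw [Kv_apply, Kv_apply]
  refine Finset.sum_congr rfl fun x _ => ?_
  congr 1
  exact Finset.prod_congr rfl fun t _ => by rw [B_eq_H]; rfl

/-- characterization of DRUM in the simple setup.  For a nonnegative `ρ`
summing to one over every menu path, consistency with DRUM (i), stability together with
`D`-monotonicity (ii), and stability together with `H^{⊗T} ρ ≥ 0` (iii) are equivalent. -/
theorem drum_simple_setup_characterization
    (T : ℕ) (hT : 1 ≤ T) (ρ : (Fin T → Fin 4) → ℝ)
    (hρ0 : 0 ≤ ρ)
    (hρ1 : ∀ j : Fin T → Fin 2,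
      ∑ r ∈ Finset.univ.filter (fun r : Fin T → Fin 4 => ∀ t, menuSimple (r t) = j t),
        ρ r = 1) :
    ((∃ ν : (Fin T → Fin 3) → ℝ, 0 ≤ ν ∧
        (kronPi fun _ : Fin T => Asimple).mulVec ν = ρ) ↔
      (StableSimple T ρ ∧ DMonotoneSimple T ρ)) ∧
    ((∃ ν : (Fin T → Fin 3) → ℝ, 0 ≤ ν ∧
        (kronPi fun _ : Fin T => Asimple).mulVec ν = ρ) ↔
      (StableSimple T ρ ∧ 0 ≤ (kronPi fun _ : Fin T => Hsimple).mulVec ρ)) := by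
  have hiff13 : (∃ ν : (Fin T → Fin 3) → ℝ, 0 ≤ ν ∧
      (kronPi fun _ : Fin T => Asimple).mulVec ν = ρ) ↔
      (StableSimple T ρ ∧ 0 ≤ (kronPi fun _ : Fin T => Hsimple).mulVec ρ) := by
    constructor
    · rintro ⟨ν, hν, hAν⟩
      have hAν' : Kv Asimple ν = ρ := hAν
      constructor
      · rw [← hAν']
        exact stable_of_rep ν
      · show 0 ≤ Kv Hsimple ρ
        rw [← hAν']
        exact H_nonneg_of_rep hν
    · rintro ⟨hst, hH⟩
      refine ⟨Kv Bsimple ρ, ?_, ?_⟩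
      · refine Pi.le_def.2 fun c => ?_
        rw [Pi.zero_apply, Bv_eq_H]
        have := Pi.le_def.1 hH (emb34 ∘ c)
        exact this
      · show Kv Asimple (Kv Bsimple ρ) = ρ
        rw [Kv_comp]
        funext r
        exact KvAB_eq hst _ r le_rfl
  have hiff23 : StableSimple T ρ →
      (DMonotoneSimple T ρ ↔ 0 ≤ (kronPi fun _ : Fin T => Hsimple).mulVec ρ) := by
    intro hst
    constructor
    · exact fun hD => H_nonneg_of_DMon hρ0 hD
    · intro hH S hS r hr
      exact Dsum_nonneg_of_H hst hH _ S r le_rfl hr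
  refine ⟨?_, hiff13⟩
  rw [hiff13]
  constructor
  · rintro ⟨h1, h2⟩
    exact ⟨h1, (hiff23 h1).2 h2⟩
  · rintro ⟨h1, h2⟩
    exact ⟨h1, (hiff23 h1).1 h2⟩

end
end

section
/- Let X be a finite set. Let Ā be the matrix whose columns are indexed by the linear orders ≻ on X and whose rows are indexed by pairs (B, x) with B a nonempty subset of X and x ∈ B, with entry equal to 1 if x is the ≻-maximum of B and 0 otherwise. Fix an enumeration B_1, B_2, …, B_M of the nonempty subsets of X and, for every j ≥ 2, a designated element of B_j; let Ā* be the matrix obtained from Ā by deleting the row (B_j, designated element of B_j) for every j ≥ 2. Then Ā* has full row rank. -/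
open Matrix

noncomputable section

/-- The type of (strict) linear orders on `X`, encoded as Boolean-valued relations that
are strict total orders. -/
def StrictLinOn (X : Type*) : Type _ :=
  {r : X → X → Bool // IsStrictTotalOrder X fun a b => r a b = true}

instance (X : Type*) [Finite X] : Finite (StrictLinOn X) :=
  inferInstanceAs (Finite {r : X → X → Bool // IsStrictTotalOrder X fun a b => r a b = true})

noncomputable instance (X : Type*) [Finite X] : Fintype (StrictLinOn X) :=
  Fintype.ofFinite _

/-- The rows of the Block–Marschak matrix: pairs `(B, x)` with `B` a nonempty subset of `X`
and `x ∈ B`. -/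
def MenuRow (X : Type*) : Type _ := {p : Finset X × X // p.2 ∈ p.1}

instance (X : Type*) [DecidableEq X] : DecidableEq (MenuRow X) :=
  inferInstanceAs (DecidableEq {p : Finset X × X // p.2 ∈ p.1})

instance (X : Type*) [Fintype X] [DecidableEq X] : Fintype (MenuRow X) :=
  inferInstanceAs (Fintype {p : Finset X × X // p.2 ∈ p.1})

/-- The full-menu-variation RUM matrix `Ā`: the `((B, x), ≻)` entry is `1` if `x` is the
`≻`-maximum of `B` and `0` otherwise. -/
def AbarMat (X : Type*) [DecidableEq X] : Matrix (MenuRow X) (StrictLinOn X) ℝ :=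
  Matrix.of fun p r =>
    if ∀ y ∈ p.val.1, y ≠ p.val.2 → r.val p.val.2 y = true then 1 else 0

/-- The retained rows after deleting, for every nonempty menu `B ≠ B₀`, the designated row
`(B, d B)`. -/
def KeptRow (X : Type*) (B₀ : Finset X) (d : Finset X → X) : Type _ :=
  {p : MenuRow X // p.val.1 = B₀ ∨ p.val.2 ≠ d p.val.1}

instance (X : Type*) [Fintype X] [DecidableEq X] (B₀ : Finset X) (d : Finset X → X) :
    Fintype (KeptRow X B₀ d) :=
  inferInstanceAs (Fintype {p : MenuRow X // p.val.1 = B₀ ∨ p.val.2 ≠ d p.val.1})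

section Aux

variable {X : Type*} [Fintype X] [DecidableEq X]

lemma slo_asymm (r : StrictLinOn X) {a b : X} (h1 : r.val a b = true)
    (h2 : r.val b a = true) : False := by
  have inst := r.property
  exact absurd (inst.toIsStrictOrder.toIsTrans.trans a b a h1 h2)
    (inst.toIsStrictOrder.toIrrefl.irrefl a)

def ofRank (f : X → ℕ) (hf : Function.Injective f) : StrictLinOn X :=
  ⟨fun a b => decide (f b < f a), by
    refine { trichotomous := ?_, irrefl := ?_, trans := ?_ }
    · intro a b
      rcases lt_trichotomy (f a) (f b) with h | h | h
      · intro _ hba; exact (hba (by simpa using h)).elim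
      · intro _ _; exact hf h
      · intro hab _; exact (hab (by simpa using h)).elim
    · intro a; simp
    · intro a b c hab hbc
      simp only [decide_eq_true_eq] at *
      omega⟩

lemma ofRank_val (f : X → ℕ) (hf : Function.Injective f) (a b : X) :
    (ofRank f hf).val a b = true ↔ f b < f a := by
  simp [ofRank]

lemma exists_rmax' (r : StrictLinOn X) : ∀ (B : Finset X), B.Nonempty →
    ∃ m ∈ B, ∀ y ∈ B, y ≠ m → r.val m y = true := by
  classical
  intro B
  induction B using Finset.induction_on with
  | empty => intro h; simp at h
  | @insert a s ha ih =>
    intro _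
    rcases s.eq_empty_or_nonempty with rfl | hs
    · exact ⟨a, by simp, by simp⟩
    · obtain ⟨m, hm, hdom⟩ := ih hs
      have hne : a ≠ m := fun h => ha (h ▸ hm)
      rcases @trichotomous_of _ (fun a b => r.val a b = true) r.property.toTrichotomous a m with h | h | h
      · refine ⟨a, Finset.mem_insert_self _ _, ?_⟩
        intro y hy hya
        rcases Finset.mem_insert.mp hy with rfl | hy'
        · exact absurd rfl hya
        · by_cases hym : y = m
          · subst hym; exact h
          · exact r.property.toIsStrictOrder.toIsTrans.trans a m y h (hdom y hy' hym)
      · exact absurd h hne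
      · refine ⟨m, Finset.mem_insert_of_mem hm, ?_⟩
        intro y hy hym
        rcases Finset.mem_insert.mp hy with rfl | hy'
        · exact h
        · exact hdom y hy' hym

lemma exists_rmax (r : StrictLinOn X) (B : Finset X) (hB : B.Nonempty) :
    ∃ m ∈ B, ∀ y ∈ B, y ≠ m → r.val m y = true := exists_rmax' r B hB

def rmax (r : StrictLinOn X) (B : Finset X) (hB : B.Nonempty) : X :=
  (exists_rmax r B hB).choose

lemma rmax_mem (r : StrictLinOn X) (B : Finset X) (hB : B.Nonempty) :
    rmax r B hB ∈ B :=
  (exists_rmax r B hB).choose_spec.1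

lemma rmax_dom (r : StrictLinOn X) (B : Finset X) (hB : B.Nonempty) :
    ∀ y ∈ B, y ≠ rmax r B hB → r.val (rmax r B hB) y = true :=
  (exists_rmax r B hB).choose_spec.2

lemma rmax_eq_of (r : StrictLinOn X) (B : Finset X) (hB : B.Nonempty) (m : X)
    (hm : m ∈ B) (hdom : ∀ y ∈ B, y ≠ m → r.val m y = true) :
    rmax r B hB = m := by
  by_contra hne
  exact slo_asymm r (hdom _ (rmax_mem r B hB) hne)
    (rmax_dom r B hB m hm (fun h => hne h.symm))

lemma sum_menurow_aux (g : Finset X × X → ℝ) :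
    (∑ p : MenuRow X, g p.val) =
      ∑ q ∈ Finset.univ.filter (fun q : Finset X × X => q.2 ∈ q.1), g q :=
  (Finset.sum_subtype _ (fun x => by simp) _).symm

lemma sum_menurow (f : Finset X → X → ℝ) (hf : ∀ B z, z ∉ B → f B z = 0)
    (r : StrictLinOn X) :
    (∑ p : MenuRow X, f p.val.1 p.val.2 * AbarMat X p r) =
      ∑ B : Finset X, if hB : B.Nonempty then f B (rmax r B hB) else 0 := by
  have h0 : (∑ p : MenuRow X, f p.val.1 p.val.2 * AbarMat X p r) =
      ∑ p : MenuRow X, f p.val.1 p.val.2 *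
        (if ∀ y ∈ p.val.1, y ≠ p.val.2 → r.val p.val.2 y = true then (1:ℝ) else 0) :=
    Finset.sum_congr rfl (fun p _ => by
      by_cases hc : ∀ y ∈ p.val.1, y ≠ p.val.2 → r.val p.val.2 y = true
      · simp only [AbarMat, Matrix.of_apply, if_pos hc]
      · simp only [AbarMat, Matrix.of_apply, if_neg hc])
  rw [h0]
  refine (sum_menurow_aux (fun q : Finset X × X => f q.1 q.2 *
    (if ∀ y ∈ q.1, y ≠ q.2 → r.val q.2 y = true then (1:ℝ) else 0))).trans ?_
  rw [Finset.sum_subset (Finset.subset_univ _)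
    (fun q _ hq => by rw [hf _ _ (by simpa using hq), zero_mul])]
  rw [Fintype.sum_prod_type]
  apply Finset.sum_congr rfl
  intro B _
  by_cases hB : B.Nonempty
  · rw [dif_pos hB]
    apply Fintype.sum_eq_single (rmax r B hB) ?_ |>.trans ?_
    · intro z hz
      by_cases hzB : z ∈ B
      · rw [if_neg, mul_zero]
        intro hcond
        exact slo_asymm r (hcond _ (rmax_mem r B hB) (fun h => hz h.symm))
          (rmax_dom r B hB z hzB hz)
      · rw [hf _ _ hzB, zero_mul]
    · rw [if_pos, mul_one]
      intro y hy hyne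
      exact rmax_dom r B hB y hy hyne
  · rw [dif_neg hB]
    rw [Finset.not_nonempty_iff_eq_empty] at hB
    subst hB
    simp [hf]

end Aux

section Main

variable {X : Type*} [Fintype X] [DecidableEq X]

lemma insert_insert_sdiff {x y : X} (B : Finset X) (hx : x ∈ B) (hy : y ∈ B) :
    insert x (insert y (B \ {x, y})) = B := by
  ext a
  simp only [Finset.mem_insert, Finset.mem_sdiff, Finset.mem_singleton]
  constructor
  · rintro (rfl | rfl | ⟨h, -⟩) <;> assumption
  · intro ha
    by_cases h1 : a = x
    · exact Or.inl h1
    · by_cases h2 : a = y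
      · exact Or.inr (Or.inl h2)
      · exact Or.inr (Or.inr ⟨ha, by tauto⟩)

lemma sdiff_insert_insert {x y : X} (D : Finset X) (hx : x ∉ D) (hy : y ∉ D) :
    (insert x (insert y D)) \ {x, y} = D := by
  ext a
  simp only [Finset.mem_sdiff, Finset.mem_insert, Finset.mem_singleton]
  constructor
  · rintro ⟨(rfl | rfl | h), h2⟩ <;> tauto
  · intro ha
    refine ⟨Or.inr (Or.inr ha), ?_⟩
    rintro (rfl | rfl) <;> contradiction

def rankFun (e : X ≃ Fin (Fintype.card X)) (L : Finset X) (x y : X) : X → ℕ :=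
  fun a => if a ∈ L then (e a : ℕ) else if a = y then Fintype.card X
    else if a = x then Fintype.card X + 1 else Fintype.card X + 2 + (e a)

lemma rankFun_mem (e : X ≃ Fin (Fintype.card X)) (L : Finset X) (x y : X) {a : X}
    (ha : a ∈ L) : rankFun e L x y a = (e a : ℕ) := by simp [rankFun, ha]

lemma rankFun_y (e : X ≃ Fin (Fintype.card X)) (L : Finset X) (x y : X)
    (hyL : y ∉ L) : rankFun e L x y y = Fintype.card X := by simp [rankFun, hyL]

lemma rankFun_x (e : X ≃ Fin (Fintype.card X)) (L : Finset X) (x y : X)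
    (hxL : x ∉ L) (hxy : x ≠ y) : rankFun e L x y x = Fintype.card X + 1 := by
  simp [rankFun, hxL, hxy]

lemma rankFun_top (e : X ≃ Fin (Fintype.card X)) (L : Finset X) (x y : X) {a : X}
    (haL : a ∉ L) (hax : a ≠ x) (hay : a ≠ y) :
    rankFun e L x y a = Fintype.card X + 2 + (e a : ℕ) := by
  simp [rankFun, haL, hax, hay]

lemma rankFun_inj (e : X ≃ Fin (Fintype.card X)) (L : Finset X) (x y : X)
    (hxL : x ∉ L) (hyL : y ∉ L) (hxy : x ≠ y) :
    Function.Injective (rankFun e L x y) := by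
  intro a b hab
  have h1 : ((e a : ℕ)) < Fintype.card X := (e a).isLt
  have h2 : ((e b : ℕ)) < Fintype.card X := (e b).isLt
  unfold rankFun at hab
  split_ifs at hab
  all_goals first
    | omega
    | (exact e.injective (Fin.val_injective (by omega)))
    | simp_all

lemma exchange (c : Finset X → X → ℝ)
    (hF : ∀ r : StrictLinOn X,
      (∑ B : Finset X, if hB : B.Nonempty then c B (rmax r B hB) else 0) = 0)
    (x y : X) (hxy : x ≠ y) (L : Finset X) (hxL : x ∉ L) (hyL : y ∉ L) :
    ∑ D ∈ L.powerset,
      (c (insert x (insert y D)) x - c (insert x (insert y D)) y) = 0 := by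
  classical
  set N := Fintype.card X with hN
  obtain ⟨e⟩ : Nonempty (X ≃ Fin (Fintype.card X)) := ⟨Fintype.equivFin X⟩
  have hlt : ∀ a : X, ((e a : ℕ)) < N := fun a => (e a).isLt
  set F := rankFun e L x y with hFdef
  set F' := rankFun e L y x with hF'def
  have hFinj : Function.Injective F := rankFun_inj e L x y hxL hyL hxy
  have hF'inj : Function.Injective F' := rankFun_inj e L y x hyL hxL hxy.symm
  set r₁ := ofRank F hFinj with hr₁
  set r₂ := ofRank F' hF'inj with hr₂
  -- values
  have hFx : F x = N + 1 := rankFun_x e L x y hxL hxy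
  have hFy : F y = N := rankFun_y e L x y hyL
  have hF'x : F' x = N := rankFun_y e L y x hxL
  have hF'y : F' y = N + 1 := rankFun_x e L y x hyL hxy.symm
  have hFmem : ∀ {a}, a ∈ L → F a = (e a : ℕ) := fun ha => rankFun_mem e L x y ha
  have hF'mem : ∀ {a}, a ∈ L → F' a = (e a : ℕ) := fun ha => rankFun_mem e L y x ha
  have hFtop : ∀ {a}, a ∉ L → a ≠ x → a ≠ y → F a = N + 2 + (e a : ℕ) :=
    fun ha hax hay => rankFun_top e L x y ha hax hay
  have hF'top : ∀ {a}, a ∉ L → a ≠ x → a ≠ y → F' a = N + 2 + (e a : ℕ) :=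
    fun ha hax hay => rankFun_top e L y x ha hay hax
  have hF'le : ∀ a : X, F' a ≤ N + 1 ∨ (F' a = F a ∧ N + 2 ≤ F a) := by
    intro a
    by_cases haL : a ∈ L
    · left; rw [hF'mem haL]; have := hlt a; omega
    · by_cases hax : a = x
      · subst hax; left; omega
      · by_cases hay : a = y
        · subst hay; left; omega
        · right; rw [hF'top haL hax hay, hFtop haL hax hay]; omega
  have hFle : ∀ a : X, F a ≤ N + 1 ∨ (F' a = F a ∧ N + 2 ≤ F a) := by
    intro a
    by_cases haL : a ∈ L
    · left; rw [hFmem haL]; have := hlt a; omega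
    · by_cases hax : a = x
      · subst hax; left; omega
      · by_cases hay : a = y
        · subst hay; left; omega
        · right; rw [hF'top haL hax hay, hFtop haL hax hay]; omega
  -- the per-menu comparison
  have hkey : ∀ B : Finset X,
      ((if hB : B.Nonempty then c B (rmax r₁ B hB) else 0) -
       (if hB : B.Nonempty then c B (rmax r₂ B hB) else 0)) =
      (if x ∈ B ∧ y ∈ B ∧ B ⊆ insert x (insert y L) then c B x - c B y else 0) := by
    intro B
    by_cases hB : B.Nonempty
    · rw [dif_pos hB, dif_pos hB]
      by_cases htop : ∃ t ∈ B, t ∉ L ∧ t ≠ x ∧ t ≠ y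
      · -- some element of B in the top region: maxima agree, condition fails
        obtain ⟨t, htB, htL, htx, hty⟩ := htop
        have hcond : ¬(x ∈ B ∧ y ∈ B ∧ B ⊆ insert x (insert y L)) := by
          rintro ⟨-, -, hsub⟩
          have := hsub htB
          simp only [Finset.mem_insert] at this
          tauto
        rw [if_neg hcond]
        set m := rmax r₁ B hB with hm
        have hmB : m ∈ B := rmax_mem r₁ B hB
        have hmdom : ∀ z ∈ B, z ≠ m → F z < F m := by
          intro z hz hzm
          exact (ofRank_val F hFinj m z).mp (rmax_dom r₁ B hB z hz hzm)
        have hFt : N + 2 ≤ F t := by rw [hFtop htL htx hty]; omega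
        have hm2 : N + 2 ≤ F m := by
          by_cases hmt : m = t
          · rw [hmt]; exact hFt
          · have := hmdom t htB (fun h => hmt h.symm); omega
        have hFm' : F' m = F m := by
          rcases hF'le m with h | h
          · rcases hFle m with h' | h'
            · omega
            · exact h'.1
          · exact h.1
        have h2 : rmax r₂ B hB = m := by
          apply rmax_eq_of r₂ B hB m hmB
          intro z hz hzm
          rw [ofRank_val]
          have h1 : F z < F m := hmdom z hz hzm
          rcases hF'le z with h | h
          · omega
          · omega
        rw [h2, sub_self]
      · -- B ⊆ L ∪ {x, y}
        push_neg at htop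
        have hsub : B ⊆ insert x (insert y L) := by
          intro t ht
          simp only [Finset.mem_insert]
          by_cases h1 : t = x
          · exact Or.inl h1
          · by_cases h2 : t = y
            · exact Or.inr (Or.inl h2)
            · exact Or.inr (Or.inr (of_not_not (fun h => h2 (htop t ht h h1))))
        have hBL : ∀ z ∈ B, z ≠ x → z ≠ y → z ∈ L := by
          intro z hz h1 h2
          have := hsub hz
          simp only [Finset.mem_insert] at this
          tauto
        by_cases hxB : x ∈ B <;> by_cases hyB : y ∈ B
        · -- both x and y in B
          rw [if_pos ⟨hxB, hyB, hsub⟩]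
          have h1 : rmax r₁ B hB = x := by
            apply rmax_eq_of r₁ B hB x hxB
            intro z hz hzx
            rw [ofRank_val, hFx]
            by_cases hzy : z = y
            · subst hzy; omega
            · have := hlt z; rw [hFmem (hBL z hz hzx hzy)]; omega
          have h2 : rmax r₂ B hB = y := by
            apply rmax_eq_of r₂ B hB y hyB
            intro z hz hzy
            rw [ofRank_val, hF'y]
            by_cases hzx : z = x
            · subst hzx; omega
            · have := hlt z; rw [hF'mem (hBL z hz hzx hzy)]; omega
          rw [h1, h2]
        · -- x ∈ B, y ∉ B : both maxima are x
          rw [if_neg (by tauto)]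
          have h1 : rmax r₁ B hB = x := by
            apply rmax_eq_of r₁ B hB x hxB
            intro z hz hzx
            have hzy : z ≠ y := fun h => hyB (h ▸ hz)
            rw [ofRank_val, hFx]
            have := hlt z; rw [hFmem (hBL z hz hzx hzy)]; omega
          have h2 : rmax r₂ B hB = x := by
            apply rmax_eq_of r₂ B hB x hxB
            intro z hz hzx
            have hzy : z ≠ y := fun h => hyB (h ▸ hz)
            rw [ofRank_val, hF'x]
            have := hlt z; rw [hF'mem (hBL z hz hzx hzy)]; omega
          rw [h1, h2, sub_self]
        · -- y ∈ B, x ∉ B : both maxima are y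
          rw [if_neg (by tauto)]
          have h1 : rmax r₁ B hB = y := by
            apply rmax_eq_of r₁ B hB y hyB
            intro z hz hzy
            have hzx : z ≠ x := fun h => hxB (h ▸ hz)
            rw [ofRank_val, hFy]
            have := hlt z; rw [hFmem (hBL z hz hzx hzy)]; omega
          have h2 : rmax r₂ B hB = y := by
            apply rmax_eq_of r₂ B hB y hyB
            intro z hz hzy
            have hzx : z ≠ x := fun h => hxB (h ▸ hz)
            rw [ofRank_val, hF'y]
            have := hlt z; rw [hF'mem (hBL z hz hzx hzy)]; omega
          rw [h1, h2, sub_self]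
        · -- neither : B ⊆ L, maxima agree
          rw [if_neg (by tauto)]
          set m := rmax r₁ B hB with hm
          have hmB : m ∈ B := rmax_mem r₁ B hB
          have hmx : m ≠ x := fun h => hxB (h ▸ hmB)
          have hmy : m ≠ y := fun h => hyB (h ▸ hmB)
          have hmL : m ∈ L := hBL m hmB hmx hmy
          have h2 : rmax r₂ B hB = m := by
            apply rmax_eq_of r₂ B hB m hmB
            intro z hz hzm
            have hzx : z ≠ x := fun h => hxB (h ▸ hz)
            have hzy : z ≠ y := fun h => hyB (h ▸ hz)
            have hzL : z ∈ L := hBL z hz hzx hzy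
            have h1 : F z < F m := (ofRank_val F hFinj m z).mp (rmax_dom r₁ B hB z hz hzm)
            rw [ofRank_val, hF'mem hzL, hF'mem hmL]
            rw [hFmem hzL, hFmem hmL] at h1
            exact h1
          rw [h2, sub_self]
    · rw [dif_neg hB, dif_neg hB]
      have hBe : B = ∅ := Finset.not_nonempty_iff_eq_empty.mp hB
      subst hBe
      rw [if_neg (by simp)]
      exact sub_self 0
  -- sum it up
  have h0 : ∑ B : Finset X,
      (if x ∈ B ∧ y ∈ B ∧ B ⊆ insert x (insert y L) then c B x - c B y else 0) = 0 := by
    calc ∑ B : Finset X,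
        (if x ∈ B ∧ y ∈ B ∧ B ⊆ insert x (insert y L) then c B x - c B y else 0)
        = ∑ B : Finset X,
          ((if hB : B.Nonempty then c B (rmax r₁ B hB) else 0) -
           (if hB : B.Nonempty then c B (rmax r₂ B hB) else 0)) :=
          Finset.sum_congr rfl (fun B _ => (hkey B).symm)
      _ = (∑ B : Finset X, if hB : B.Nonempty then c B (rmax r₁ B hB) else 0) -
          (∑ B : Finset X, if hB : B.Nonempty then c B (rmax r₂ B hB) else 0) :=
          Finset.sum_sub_distrib _ _
      _ = 0 := by rw [hF r₁, hF r₂, sub_self]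
  have h2 : ∑ D ∈ L.powerset,
      (c (insert x (insert y D)) x - c (insert x (insert y D)) y)
      = ∑ B ∈ Finset.univ.filter
          (fun B : Finset X => x ∈ B ∧ y ∈ B ∧ B ⊆ insert x (insert y L)),
        (c B x - c B y) := by
    refine Finset.sum_nbij' (fun D => insert x (insert y D)) (fun B => B \ {x, y})
      ?_ ?_ ?_ ?_ ?_
    · intro D hD
      rw [Finset.mem_powerset] at hD
      simp only [Finset.mem_filter, Finset.mem_univ, true_and]
      exact ⟨Finset.mem_insert_self _ _,
        Finset.mem_insert_of_mem (Finset.mem_insert_self _ _),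
        Finset.insert_subset_insert x (Finset.insert_subset_insert y hD)⟩
    · intro B hB
      simp only [Finset.mem_filter, Finset.mem_univ, true_and] at hB
      obtain ⟨hxB, hyB, hsub⟩ := hB
      rw [Finset.mem_powerset]
      intro a ha
      rw [Finset.mem_sdiff] at ha
      obtain ⟨haB, hnot⟩ := ha
      have := hsub haB
      simp only [Finset.mem_insert, Finset.mem_singleton] at this hnot
      tauto
    · intro D hD
      rw [Finset.mem_powerset] at hD
      exact sdiff_insert_insert D (fun h => hxL (hD h)) (fun h => hyL (hD h))
    · intro B hB
      simp only [Finset.mem_filter, Finset.mem_univ, true_and] at hB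
      exact insert_insert_sdiff B hB.1 hB.2.1
    · intro D _; rfl
  rw [h2, Finset.sum_filter]
  exact h0

lemma constancy (c : Finset X → X → ℝ)
    (hF : ∀ r : StrictLinOn X,
      (∑ B : Finset X, if hB : B.Nonempty then c B (rmax r B hB) else 0) = 0)
    (x y : X) (hxy : x ≠ y) (B : Finset X) (hxB : x ∈ B) (hyB : y ∈ B) :
    c B x = c B y := by
  classical
  have hmob : ∀ n (L : Finset X), L.card ≤ n → x ∉ L → y ∉ L →
      c (insert x (insert y L)) x = c (insert x (insert y L)) y := by
    intro n
    induction n with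
    | zero =>
      intro L hc hx hy
      have hL : L = ∅ := Finset.card_eq_zero.mp (Nat.le_zero.mp hc)
      subst hL
      have h := exchange c hF x y hxy ∅ (by simp) (by simp)
      rw [Finset.powerset_empty, Finset.sum_singleton, sub_eq_zero] at h
      exact h
    | succ n ih =>
      intro L hc hx hy
      have h0 := exchange c hF x y hxy L hx hy
      rw [← Finset.add_sum_erase _ _ (Finset.mem_powerset_self L)] at h0
      have hrest : ∑ D ∈ L.powerset.erase L,
          (c (insert x (insert y D)) x - c (insert x (insert y D)) y) = 0 := by
        apply Finset.sum_eq_zero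
        intro D hD
        rw [Finset.mem_erase, Finset.mem_powerset] at hD
        obtain ⟨hne, hsub⟩ := hD
        have hss : D ⊂ L := lt_of_le_of_ne hsub hne
        have hcard : D.card ≤ n := by
          have := Finset.card_lt_card hss
          omega
        exact sub_eq_zero_of_eq
          (ih D hcard (fun h => hx (hsub h)) (fun h => hy (hsub h)))
      rw [hrest, add_zero, sub_eq_zero] at h0
      exact h0
  have hx' : x ∉ B \ {x, y} := by simp
  have hy' : y ∉ B \ {x, y} := by simp
  have h := hmob (B \ {x, y}).card (B \ {x, y}) le_rfl hx' hy'
  rwa [insert_insert_sdiff B hxB hyB] at h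

lemma sum_keptrow_aux (B₀ : Finset X) (d : Finset X → X) (g : MenuRow X → ℝ) :
    (∑ q : KeptRow X B₀ d, g q.val) =
      ∑ p ∈ Finset.univ.filter
        (fun p : MenuRow X => p.val.1 = B₀ ∨ p.val.2 ≠ d p.val.1), g p :=
  (Finset.sum_subtype _ (fun x => by simp) _).symm

lemma ker_triv (B₀ : Finset X) (hB₀ : B₀.Nonempty) (d : Finset X → X)
    (hd : ∀ B : Finset X, B.Nonempty → B ≠ B₀ → d B ∈ B)
    (v : KeptRow X B₀ d → ℝ)
    (hv : ∀ r : StrictLinOn X, ∑ q : KeptRow X B₀ d, AbarMat X q.val r * v q = 0) :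
    v = 0 := by
  classical
  set c : Finset X → X → ℝ := fun B z =>
    if h : z ∈ B ∧ (B = B₀ ∨ z ≠ d B) then v ⟨⟨(B, z), h.1⟩, h.2⟩ else 0 with hcdef
  have hcval : ∀ B z (h : z ∈ B ∧ (B = B₀ ∨ z ≠ d B)),
      c B z = v ⟨⟨(B, z), h.1⟩, h.2⟩ := by
    intro B z h; rw [hcdef]; exact dif_pos h
  have hc0 : ∀ B z, ¬(z ∈ B ∧ (B = B₀ ∨ z ≠ d B)) → c B z = 0 := by
    intro B z h; rw [hcdef]; exact dif_neg h
  have hcnot : ∀ B z, z ∉ B → c B z = 0 := fun B z hz => hc0 B z (fun h => hz h.1)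
  have hq : ∀ q : KeptRow X B₀ d, c q.val.val.1 q.val.val.2 = v q := by
    intro q
    have h : q.val.val.2 ∈ q.val.val.1 ∧
        (q.val.val.1 = B₀ ∨ q.val.val.2 ≠ d q.val.val.1) := ⟨q.val.property, q.property⟩
    rw [hcval _ _ h]
    exact congrArg v (Subtype.ext (Subtype.ext Prod.mk.eta))
  have hF : ∀ r : StrictLinOn X,
      (∑ B : Finset X, if hB : B.Nonempty then c B (rmax r B hB) else 0) = 0 := by
    intro r
    rw [← sum_menurow c hcnot r]
    have e1 : (∑ p : MenuRow X, c p.val.1 p.val.2 * AbarMat X p r) =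
        ∑ p ∈ Finset.univ.filter
          (fun p : MenuRow X => p.val.1 = B₀ ∨ p.val.2 ≠ d p.val.1),
          c p.val.1 p.val.2 * AbarMat X p r := by
      symm
      apply Finset.sum_subset (Finset.subset_univ _)
      intro p _ hp
      simp only [Finset.mem_filter, Finset.mem_univ, true_and] at hp
      rw [hc0 _ _ (fun h => hp h.2), zero_mul]
    rw [e1, ← sum_keptrow_aux B₀ d (fun p => c p.val.1 p.val.2 * AbarMat X p r)]
    calc (∑ q : KeptRow X B₀ d,
          (fun p : MenuRow X => c p.val.1 p.val.2 * AbarMat X p r) q.val)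
        = ∑ q : KeptRow X B₀ d, AbarMat X q.val r * v q :=
          Finset.sum_congr rfl (fun q _ => by
            show c q.val.val.1 q.val.val.2 * AbarMat X q.val r = _
            rw [hq q, mul_comm])
      _ = 0 := hv r
  -- rows of menus other than B₀ vanish
  have hzero : ∀ B : Finset X, B ≠ B₀ → ∀ z, c B z = 0 := by
    intro B hBne z
    by_cases hz : z ∈ B
    · have hBnonempty : B.Nonempty := ⟨z, hz⟩
      have hdB : d B ∈ B := hd B hBnonempty hBne
      have hdzero : c B (d B) = 0 := by
        apply hc0
        rintro ⟨-, h | h⟩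
        · exact hBne h
        · exact h rfl
      by_cases hzd : z = d B
      · rw [hzd]; exact hdzero
      · rw [constancy c hF z (d B) hzd B hz hdB]; exact hdzero
    · exact hcnot B z hz
  -- rows of B₀ vanish, using one particular order
  have einj : Function.Injective (fun a : X => ((Fintype.equivFin X) a : ℕ)) :=
    fun a b h => (Fintype.equivFin X).injective (Fin.val_injective h)
  set r₀ : StrictLinOn X := ofRank _ einj with hr₀
  have hsingle : (∑ B : Finset X, if hB : B.Nonempty then c B (rmax r₀ B hB) else 0) =
      (if hB : B₀.Nonempty then c B₀ (rmax r₀ B₀ hB) else 0) := by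
    apply Fintype.sum_eq_single
    intro B hBne
    by_cases hB : B.Nonempty
    · rw [dif_pos hB]; exact hzero B hBne _
    · rw [dif_neg hB]
  have hmax0 : c B₀ (rmax r₀ B₀ hB₀) = 0 := by
    have := (hsingle.symm.trans (hF r₀))
    rwa [dif_pos hB₀] at this
  have hB0all : ∀ z ∈ B₀, c B₀ z = 0 := by
    intro z hz
    by_cases hzm : z = rmax r₀ B₀ hB₀
    · rw [hzm]; exact hmax0
    · rw [constancy c hF z (rmax r₀ B₀ hB₀) hzm B₀ hz (rmax_mem r₀ B₀ hB₀)]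
      exact hmax0
  funext q
  have hval : v q = c q.val.val.1 q.val.val.2 := (hq q).symm
  show v q = 0
  rw [hval]
  by_cases hqB : q.val.val.1 = B₀
  · have hzB : q.val.val.2 ∈ B₀ := by
      have h := q.val.property
      rw [hqB] at h
      exact h
    rw [hqB]
    exact hB0all _ hzB
  · exact hzero _ hqB _

end Main

/-- the reduced Block–Marschak matrix `Ā*`, obtained from `Ā` by deleting the
designated row of every nonempty menu except the first one `B₀`, has full row rank. -/

theorem reduced_blockMarschak_matrix_full_row_rank
    (X : Type*) [Fintype X] [DecidableEq X]
    (B₀ : Finset X) (hB₀ : B₀.Nonempty)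
    (d : Finset X → X) (hd : ∀ B : Finset X, B.Nonempty → B ≠ B₀ → d B ∈ B) :
    ((AbarMat X).submatrix
        (fun p : KeptRow X B₀ d => p.val) id).rank =
      Fintype.card (KeptRow X B₀ d) := by
  classical
  rw [← Matrix.rank_transpose]
  have hker : LinearMap.ker (Matrix.mulVecLin
      ((AbarMat X).submatrix (fun p : KeptRow X B₀ d => p.val) id)ᵀ) = ⊥ := by
    rw [LinearMap.ker_eq_bot']
    intro v hv
    apply ker_triv B₀ hB₀ d hd v
    intro r
    have h := congrFun hv r
    simpa [Matrix.mulVecLin_apply, Matrix.mulVec, dotProduct,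
      Matrix.transpose_apply, Matrix.submatrix_apply] using h
  have h1 := LinearMap.finrank_range_add_finrank_ker
    (Matrix.mulVecLin ((AbarMat X).submatrix (fun p : KeptRow X B₀ d => p.val) id)ᵀ)
  rw [hker, finrank_bot, add_zero, Module.finrank_fintype_fun_eq_card] at h1
  exact h1

end
end

section
/- Let X be a finite set and ≻₀ a strict partial order on X. Let 𝒥 be a family of nonempty subsets of X (the observed menus), and let ρ assign to each B ∈ 𝒥 a probability distribution ρ(·|B) on B. Then the following are equivalent: (i) there exists a probability distribution ν over the linear orders on X that extend ≻₀ such that, for every B ∈ 𝒥 and x ∈ B, ρ(x|B) equals the ν-probability of the set of linear orders whose maximum on B is x; (ii) there exists ρ̄, assigning a probability distribution ρ̄(·|B) on B to every nonempty subset B of X, such that ρ̄(·|B) = ρ(·|B) for every B ∈ 𝒥 (ρ̄ agrees with ρ), ρ̄(x|B) = 0 whenever some y ∈ B satisfies y ≻₀ x (ρ̄ is IU-consistent), and the Block–Marschak inequalities hold: Σ_{B ⊆ B′ ⊆ X} (−1)^{|B′∖B|} ρ̄(x|B′) ≥ 0 for every nonempty B ⊆ X and every x ∈ B. -/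
open Matrix

noncomputable section

/-- A linear order `r` extends the strict partial order `r₀`. -/
def ExtendsOrder {X : Type*} (r : StrictLinOn X) (r₀ : X → X → Prop) : Prop :=
  ∀ x y, r₀ x y → r.val x y = true

section BMAuxDev

open Finset

set_option linter.unusedSectionVars false
set_option linter.unusedVariables false

namespace BMAux



variable {X : Type*} [Fintype X] [DecidableEq X]

lemma powerset_alt (C : Finset X) :
    ∑ T ∈ C.powerset, (-1 : ℝ) ^ T.card = if C = ∅ then 1 else 0 := by
  have := @Finset.sum_powerset_neg_one_pow_card X _ C
  have h2 : ((∑ m ∈ C.powerset, (-1 : ℤ) ^ m.card : ℤ) : ℝ)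
      = ∑ m ∈ C.powerset, (-1 : ℝ) ^ m.card := by push_cast; ring_nf
  rw [← h2, this]
  split <;> norm_num

/-- Kernel K3 : exponent counted from below. -/
lemma kernel_below (B C : Finset X) :
    ∑ B' ∈ univ.filter (fun B' : Finset X => B ⊆ B' ∧ B' ⊆ C),
      (-1 : ℝ) ^ ((B' \ B).card) = if B = C then 1 else 0 := by
  by_cases hBC : B ⊆ C
  · have hiff : B = C ↔ C \ B = ∅ := by
      rw [sdiff_eq_empty_iff_subset]
      exact ⟨fun h => h ▸ le_refl _, fun h => le_antisymm hBC h⟩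
    rw [if_congr hiff rfl rfl, ← powerset_alt (C \ B)]
    refine Finset.sum_nbij' (fun B' => B' \ B) (fun T => B ∪ T) ?_ ?_ ?_ ?_ ?_
    · intro B' hB'
      simp only [mem_filter, mem_univ, true_and] at hB'
      simp only [mem_powerset]
      exact sdiff_subset_sdiff hB'.2 (le_refl _)
    · intro T hT
      simp only [mem_powerset] at hT
      simp only [mem_filter, mem_univ, true_and]
      constructor
      · exact subset_union_left
      · exact union_subset hBC (hT.trans sdiff_subset)
    · intro B' hB'
      simp only [mem_filter, mem_univ, true_and] at hB'
      exact union_sdiff_of_subset hB'.1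
    · intro T hT
      simp only [mem_powerset] at hT
      apply union_sdiff_cancel_left
      rw [Finset.disjoint_left]
      intro a haB haT
      exact (mem_sdiff.1 (hT haT)).2 haB
    · intro B' hB'; rfl
  · have : (univ.filter (fun B' : Finset X => B ⊆ B' ∧ B' ⊆ C)) = ∅ := by
      apply filter_eq_empty_iff.2
      intro B' _ h
      exact hBC (h.1.trans h.2)
    rw [this]
    have : B ≠ C := fun h => hBC (h ▸ le_refl _)
    simp [this]

/-- Kernel K2 : exponent counted from above. -/
lemma kernel_above (B C : Finset X) :
    ∑ B' ∈ univ.filter (fun B' : Finset X => B ⊆ B' ∧ B' ⊆ C),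
      (-1 : ℝ) ^ ((C \ B').card) = if B = C then 1 else 0 := by
  by_cases hBC : B ⊆ C
  · have hiff : B = C ↔ C \ B = ∅ := by
      rw [sdiff_eq_empty_iff_subset]
      exact ⟨fun h => h ▸ le_refl _, fun h => le_antisymm hBC h⟩
    rw [if_congr hiff rfl rfl, ← powerset_alt (C \ B)]
    refine Finset.sum_nbij' (fun B' => C \ B') (fun T => C \ T) ?_ ?_ ?_ ?_ ?_
    · intro B' hB'
      simp only [mem_filter, mem_univ, true_and] at hB'
      simp only [mem_powerset]
      exact sdiff_subset_sdiff (le_refl _) hB'.1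
    · intro T hT
      simp only [mem_powerset] at hT
      simp only [mem_filter, mem_univ, true_and]
      constructor
      · intro a ha
        simp only [mem_sdiff]
        refine ⟨hBC ha, fun haT => ?_⟩
        exact (mem_sdiff.1 (hT haT)).2 ha
      · exact sdiff_subset
    · intro B' hB'
      simp only [mem_filter, mem_univ, true_and] at hB'
      exact Finset.sdiff_sdiff_eq_self hB'.2
    · intro T hT
      simp only [mem_powerset] at hT
      exact Finset.sdiff_sdiff_eq_self (hT.trans sdiff_subset)
    · intro B' hB'; rfl
  · have : (univ.filter (fun B' : Finset X => B ⊆ B' ∧ B' ⊆ C)) = ∅ := by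
      apply filter_eq_empty_iff.2
      intro B' _ h
      exact hBC (h.1.trans h.2)
    rw [this]
    have : B ≠ C := fun h => hBC (h ▸ le_refl _)
    simp [this]

/-- K1 : supersets version -/
lemma kernel_supersets (B : Finset X) :
    ∑ B' ∈ univ.filter (fun B' : Finset X => B ⊆ B'),
      (-1 : ℝ) ^ ((B' \ B).card) = if B = (univ : Finset X) then 1 else 0 := by
  rw [← kernel_below B univ]
  apply Finset.sum_congr _ (fun _ _ => rfl)
  apply filter_congr
  intro B' _
  simp


variable {X : Type*} [Fintype X] [DecidableEq X]

/-- nodup lists enumerating `B`. -/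
def LB (B : Finset X) : Finset (List X) := B.toList.permutations.toFinset

lemma mem_LB {B : Finset X} {l : List X} : l ∈ LB B ↔ l.Perm B.toList := by
  simp [LB, List.mem_permutations]

lemma perm_of_nodup_toFinset_eq {l l' : List X} (hn : l.Nodup) (hn' : l'.Nodup)
    (h : l.toFinset = l'.toFinset) : l.Perm l' := by
  apply List.Subperm.antisymm
  · exact hn.subperm (fun a ha => by
      have : a ∈ l.toFinset := List.mem_toFinset.2 ha
      rw [h] at this; exact List.mem_toFinset.1 this)
  · exact hn'.subperm (fun a ha => by
      have : a ∈ l'.toFinset := List.mem_toFinset.2 ha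
      rw [← h] at this; exact List.mem_toFinset.1 this)

lemma mem_LB' {B : Finset X} {l : List X} : l ∈ LB B ↔ l.Nodup ∧ l.toFinset = B := by
  rw [mem_LB]
  constructor
  · intro h
    refine ⟨h.nodup_iff.2 B.nodup_toList, ?_⟩
    rw [List.toFinset_eq_of_perm _ _ h, toList_toFinset]
  · intro ⟨h1, h2⟩
    exact perm_of_nodup_toFinset_eq h1 B.nodup_toList (by rw [h2, toList_toFinset])

lemma LB_empty : LB (∅ : Finset X) = {[]} := by
  ext l
  simp only [mem_LB', Finset.mem_singleton, List.toFinset_eq_empty_iff]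
  constructor
  · exact fun h => h.2
  · rintro rfl; exact ⟨List.nodup_nil, rfl⟩

lemma LB_eq_biUnion {B : Finset X} (hB : B.Nonempty) :
    LB B = B.biUnion (fun x => (LB (B.erase x)).image (x :: ·)) := by
  ext l
  simp only [mem_biUnion, Finset.mem_image]
  constructor
  · intro hl
    rw [mem_LB'] at hl
    obtain ⟨hn, hf⟩ := hl
    match l with
    | [] => exact absurd hf.symm (by simpa using hB.ne_empty)
    | x :: t =>
      refine ⟨x, ?_, t, ?_, rfl⟩
      · rw [← hf]; simp
      · rw [mem_LB']
        have hxt : x ∉ t := (List.nodup_cons.1 hn).1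
        refine ⟨(List.nodup_cons.1 hn).2, ?_⟩
        rw [← hf]
        simp only [List.toFinset_cons]
        rw [Finset.erase_insert (by simp [hxt])]
  · rintro ⟨x, hx, t, ht, rfl⟩
    rw [mem_LB'] at ht ⊢
    obtain ⟨hn, hf⟩ := ht
    have hxt : x ∉ t := fun h => by
      have := hf ▸ List.mem_toFinset.2 h
      exact (Finset.mem_erase.1 this).1 rfl
    refine ⟨List.nodup_cons.2 ⟨hxt, hn⟩, ?_⟩
    simp only [List.toFinset_cons, hf]
    exact Finset.insert_erase hx

lemma sum_LB_cons {B : Finset X} (hB : B.Nonempty) (F : List X → ℝ) :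
    ∑ l ∈ LB B, F l = ∑ x ∈ B, ∑ t ∈ LB (B.erase x), F (x :: t) := by
  rw [LB_eq_biUnion hB, Finset.sum_biUnion, ]
  · apply Finset.sum_congr rfl
    intro x _
    rw [Finset.sum_image]
    intro t _ t' _ h
    exact List.tail_eq_of_cons_eq h
  · intro x _ y _ hxy
    simp only [Function.onFun]
    rw [Finset.disjoint_left]
    intro l hl hl'
    simp only [Finset.mem_image] at hl hl'
    obtain ⟨t, _, rfl⟩ := hl
    obtain ⟨t', _, h⟩ := hl'
    exact hxy (List.head_eq_of_cons_eq h).symm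

lemma reverse_mem_LB {B : Finset X} {l : List X} (h : l ∈ LB B) : l.reverse ∈ LB B := by
  rw [mem_LB] at h ⊢
  exact (l.reverse_perm).trans h

lemma sum_LB_reverse {B : Finset X} (F : List X → ℝ) :
    ∑ l ∈ LB B, F l = ∑ l ∈ LB B, F l.reverse := by
  refine Finset.sum_nbij' (fun l => l.reverse) (fun l => l.reverse) ?_ ?_ ?_ ?_ ?_ <;>
    intro l hl <;> simp [reverse_mem_LB hl]

lemma sum_LB_concat {B : Finset X} (hB : B.Nonempty) (F : List X → ℝ) :
    ∑ l ∈ LB B, F l = ∑ x ∈ B, ∑ t ∈ LB (B.erase x), F (t ++ [x]) := by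
  rw [sum_LB_reverse, sum_LB_cons hB]
  apply Finset.sum_congr rfl
  intro x _
  rw [sum_LB_reverse]
  apply Finset.sum_congr rfl
  intro t _
  simp


variable {X : Type*} [Fintype X] [DecidableEq X]

section defs
variable (ρbar : Finset X → X → ℝ)

/-- Block–Marschak quantity. -/
def qf (x : X) (B : Finset X) : ℝ :=
  ∑ B' ∈ univ.filter (fun B' : Finset X => B ⊆ B'), (-1 : ℝ) ^ ((B' \ B).card) * ρbar B' x

lemma qf_def (x : X) (B : Finset X) : qf ρbar x B =
    ∑ B' ∈ univ.filter (fun B' : Finset X => B ⊆ B'),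
      (-1 : ℝ) ^ ((B' \ B).card) * ρbar B' x := rfl

def ff (B : Finset X) : ℝ := ∑ x ∈ B, qf ρbar x B

def gf (x : X) (B : Finset X) : ℝ :=
  if ff ρbar B = 0 then 0 else qf ρbar x B / ff ρbar B

def Wf : List X → Finset X → ℝ
  | [], _ => 1
  | (x :: t), B => gf ρbar x B * Wf t (B.erase x)

@[simp] lemma Wf_nil (B : Finset X) : Wf ρbar [] B = 1 := rfl

@[simp] lemma Wf_cons (B : Finset X) (x : X) (t : List X) :
    Wf ρbar (x :: t) B = gf ρbar x B * Wf ρbar t (B.erase x) := rfl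

lemma erase_sdiff_toFinset (B : Finset X) (x : X) (p : List X) :
    (B.erase x) \ p.toFinset = B \ (x :: p).toFinset := by
  ext z
  simp only [mem_sdiff, Finset.mem_erase, List.toFinset_cons, Finset.mem_insert]
  tauto

lemma Wf_append (p t : List X) : ∀ (B : Finset X),
    Wf ρbar (p ++ t) B = Wf ρbar p B * Wf ρbar t (B \ p.toFinset) := by
  induction p with
  | nil => intro B; simp
  | cons x p' ih =>
    intro B
    simp only [List.cons_append, Wf_cons, ih (B.erase x), erase_sdiff_toFinset]
    ring

lemma Wf_factor_ne_zero (l : List X) : ∀ (B : Finset X), Wf ρbar l B ≠ 0 →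
    ∀ (p : List X) (y : X) (t : List X), l = p ++ y :: t →
      gf ρbar y (B \ p.toFinset) ≠ 0 := by
  induction l with
  | nil =>
    intro B _ p y t h
    exact absurd h (by simp)
  | cons a l' ih =>
    intro B hW p y t h
    rw [Wf_cons] at hW
    match p with
    | [] =>
      simp only [List.nil_append, List.cons.injEq] at h
      obtain ⟨rfl, rfl⟩ := h
      simpa using left_ne_zero_of_mul hW
    | b :: p' =>
      simp only [List.cons_append, List.cons.injEq] at h
      obtain ⟨rfl, h2⟩ := h
      have := ih (B.erase a) (right_ne_zero_of_mul hW) p' y t h2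
      rwa [erase_sdiff_toFinset] at this

end defs

section hyp

variable (ρbar : Finset X → X → ℝ)
variable (hprob : ∀ B : Finset X, B.Nonempty →
    (∀ x, 0 ≤ ρbar B x) ∧ (∀ x ∉ B, ρbar B x = 0) ∧ ∑ x ∈ B, ρbar B x = 1)
variable (hBM : ∀ B : Finset X, B.Nonempty → ∀ x ∈ B, 0 ≤ qf ρbar x B)

include hBM in
lemma ff_nonneg {B : Finset X} (hB : B.Nonempty) : 0 ≤ ff ρbar B :=
  Finset.sum_nonneg (fun x hx => hBM B hB x hx)

include hBM in
lemma qf_le_ff {B : Finset X} (hB : B.Nonempty) {x : X} (hx : x ∈ B) :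
    qf ρbar x B ≤ ff ρbar B :=
  Finset.single_le_sum (fun y hy => hBM B hB y hy) hx

include hBM in
lemma gf_nonneg {B : Finset X} (hB : B.Nonempty) {x : X} (hx : x ∈ B) :
    0 ≤ gf ρbar x B := by
  unfold gf
  split
  · exact le_refl _
  · rename_i h
    have h1 := hBM B hB x hx
    have h2 := (ff_nonneg ρbar hBM hB).lt_of_ne (Ne.symm h)
    positivity

include hBM in
lemma Wf_nonneg (l : List X) : ∀ (B : Finset X), l.Nodup → (∀ a ∈ l, a ∈ B) →
    0 ≤ Wf ρbar l B := by
  induction l with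
  | nil => intro B _ _; simp
  | cons x t ih =>
    intro B hnd hsub
    rw [Wf_cons]
    have hx : x ∈ B := hsub x (by simp)
    apply mul_nonneg (gf_nonneg ρbar hBM ⟨x, hx⟩ hx)
    have hxt : x ∉ t := (List.nodup_cons.1 hnd).1
    exact ih (B.erase x) (List.nodup_cons.1 hnd).2
      (fun a ha => Finset.mem_erase.2 ⟨fun h => hxt (h ▸ ha), hsub a (by simp [ha])⟩)

include hprob in
lemma conservation (B : Finset X) (hB : B.Nonempty) :
    ff ρbar B - ∑ y ∈ Bᶜ, qf ρbar y (insert y B)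
      = if B = (univ : Finset X) then 1 else 0 := by
  have hff : ff ρbar B = ∑ B' ∈ univ.filter (fun B' : Finset X => B ⊆ B'),
      (-1:ℝ)^((B' \ B).card) * ∑ x ∈ B, ρbar B' x := by
    unfold ff qf
    rw [Finset.sum_comm]
    exact Finset.sum_congr rfl (fun B' _ => by rw [Finset.mul_sum])
  have hin : ∑ y ∈ Bᶜ, qf ρbar y (insert y B)
      = ∑ B' ∈ univ.filter (fun B' : Finset X => B ⊆ B'),
          (-(-1:ℝ)^((B' \ B).card)) * ∑ y ∈ B' \ B, ρbar B' y := by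
    have hstep : ∀ y ∈ Bᶜ, qf ρbar y (insert y B)
        = ∑ B' ∈ univ.filter (fun B' : Finset X => B ⊆ B'),
            (if y ∈ B' then (-(-1:ℝ)^((B' \ B).card)) * ρbar B' y else 0) := by
      intro y hy
      rw [Finset.mem_compl] at hy
      unfold qf
      rw [Finset.sum_filter, Finset.sum_filter]
      apply Finset.sum_congr rfl
      intro B' _
      by_cases h1 : insert y B ⊆ B'
      · have h2 : B ⊆ B' := (Finset.subset_insert y B).trans h1
        have h3 : y ∈ B' := h1 (Finset.mem_insert_self y B)
        rw [if_pos h1, if_pos h2, if_pos h3]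
        have hyd : y ∈ B' \ B := Finset.mem_sdiff.2 ⟨h3, hy⟩
        have hset : B' \ insert y B = (B' \ B).erase y := by
          ext z
          simp only [Finset.mem_sdiff, Finset.mem_insert, Finset.mem_erase]
          tauto
        have hcard : ((B' \ B).erase y).card + 1 = (B' \ B).card :=
          Finset.card_erase_add_one hyd
        have hsign : (-1:ℝ)^((B' \ insert y B).card) = -(-1:ℝ)^((B' \ B).card) := by
          rw [hset, ← hcard, pow_succ]
          ring
        rw [hsign]
      · rw [if_neg h1]
        by_cases h2 : B ⊆ B'
        · have h3 : y ∉ B' := fun hy3 => h1 (Finset.insert_subset hy3 h2)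
          rw [if_pos h2, if_neg h3]
        · rw [if_neg h2]
    rw [Finset.sum_congr rfl hstep, Finset.sum_comm]
    apply Finset.sum_congr rfl
    intro B' hB'
    rw [Finset.mul_sum, ← Finset.sum_filter]
    apply Finset.sum_congr _ (fun _ _ => rfl)
    ext z
    simp only [Finset.mem_filter, Finset.mem_compl, Finset.mem_sdiff]
    tauto
  rw [hff, hin, ← Finset.sum_sub_distrib, ← kernel_supersets B]
  apply Finset.sum_congr rfl
  intro B' hB'
  simp only [Finset.mem_filter, Finset.mem_univ, true_and] at hB'
  have hB'ne : B'.Nonempty := hB.mono hB'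
  have hsum : ∑ x ∈ B' \ B, ρbar B' x + ∑ x ∈ B, ρbar B' x = ∑ x ∈ B', ρbar B' x :=
    Finset.sum_sdiff hB'
  have h1 : ∑ x ∈ B', ρbar B' x = 1 := (hprob B' hB'ne).2.2
  rw [h1] at hsum
  linear_combination ((-1:ℝ)^((B' \ B).card)) * hsum

lemma qf_univ_eq (x : X) : qf ρbar x (univ : Finset X) = ρbar univ x := by
  unfold qf
  have hfil : (univ.filter (fun B' : Finset X => (univ : Finset X) ⊆ B')) = {univ} := by
    ext B'
    simp [Finset.univ_subset_iff]
  rw [hfil]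
  simp

include hprob in
lemma ff_univ [Nonempty X] : ff ρbar (univ : Finset X) = 1 := by
  unfold ff
  rw [Finset.sum_congr rfl (fun x _ => qf_univ_eq ρbar x)]
  exact (hprob univ Finset.univ_nonempty).2.2

include hprob hBM in
lemma Hsum_one : ∀ B : Finset X, (B = ∅ ∨ ff ρbar B ≠ 0) →
    ∑ l ∈ LB B, Wf ρbar l B = 1 := by
  intro B
  induction B using Finset.strongInduction with
  | _ B ih =>
    intro hcond
    rcases eq_or_ne B ∅ with rfl | hne
    · rw [LB_empty]; simp
    · have hBne : B.Nonempty := Finset.nonempty_iff_ne_empty.2 hne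
      have hf : ff ρbar B ≠ 0 := hcond.resolve_left hne
      rw [sum_LB_cons hBne]
      have hterm : ∀ x ∈ B, ∑ t ∈ LB (B.erase x), Wf ρbar (x :: t) B = gf ρbar x B := by
        intro x hx
        have hc : ∀ t ∈ LB (B.erase x),
            Wf ρbar (x :: t) B = gf ρbar x B * Wf ρbar t (B.erase x) := fun t _ => rfl
        rw [Finset.sum_congr rfl hc, ← Finset.mul_sum]
        rcases eq_or_ne (qf ρbar x B) 0 with hq | hq
        · rw [gf, if_neg hf, hq]; simp
        · have hqpos : 0 < qf ρbar x B := (hBM B hBne x hx).lt_of_ne (Ne.symm hq)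
          have hrec : ∑ t ∈ LB (B.erase x), Wf ρbar t (B.erase x) = 1 := by
            apply ih (B.erase x) (Finset.erase_ssubset hx)
            rcases eq_or_ne (B.erase x) ∅ with h | h
            · exact Or.inl h
            · right
              have hEne : (B.erase x).Nonempty := Finset.nonempty_iff_ne_empty.2 h
              have hxin : x ∈ (B.erase x)ᶜ := by simp
              have hcons := conservation ρbar hprob (B.erase x) hEne
              have hBneq : B.erase x ≠ univ := fun h2 => by
                have : x ∈ B.erase x := h2 ▸ Finset.mem_univ x
                simp at this
              rw [if_neg hBneq] at hcons
              have hge : qf ρbar x (insert x (B.erase x)) ≤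
                  ∑ y ∈ (B.erase x)ᶜ, qf ρbar y (insert y (B.erase x)) := by
                exact Finset.single_le_sum
                  (f := fun y => qf ρbar y (insert y (B.erase x)))
                  (fun y _ => hBM _ (Finset.insert_nonempty _ _) y (Finset.mem_insert_self _ _))
                  hxin
              rw [Finset.insert_erase hx] at hge
              intro h0
              rw [h0] at hcons
              have hz : ∑ y ∈ (B.erase x)ᶜ, qf ρbar y (insert y (B.erase x)) = 0 := by
                linarith
              rw [hz] at hge
              linarith
          rw [hrec, mul_one]
      rw [Finset.sum_congr rfl hterm]
      have hg : ∀ x ∈ B, gf ρbar x B = qf ρbar x B / ff ρbar B := fun x _ => if_neg hf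
      rw [Finset.sum_congr rfl hg, ← Finset.sum_div]
      exact div_self hf

include hprob hBM in
lemma Mf_eq_ff : ∀ (B : Finset X), B.Nonempty →
    ∑ p ∈ LB Bᶜ, Wf ρbar p univ = ff ρbar B := by
  suffices h : ∀ (n : ℕ) (B : Finset X), Bᶜ.card = n → B.Nonempty →
      ∑ p ∈ LB Bᶜ, Wf ρbar p univ = ff ρbar B from fun B hB => h _ B rfl hB
  intro n
  induction n using Nat.strong_induction_on with
  | _ n ih =>
    intro B hcard hB
    haveI : Nonempty X := ⟨hB.choose⟩
    rcases eq_or_ne B univ with rfl | hne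
    · have hc : (univ : Finset X)ᶜ = ∅ := by simp
      rw [hc, LB_empty, ff_univ ρbar hprob]
      simp
    · have hcne : (Bᶜ).Nonempty := Finset.nonempty_iff_ne_empty.2 (fun h => hne ((Finset.compl_eq_empty_iff B).1 h))
      rw [sum_LB_concat hcne]
      have hterm : ∀ y ∈ Bᶜ, ∑ t ∈ LB (Bᶜ.erase y), Wf ρbar (t ++ [y]) univ
          = qf ρbar y (insert y B) := by
        intro y hy
        have hyB : y ∉ B := Finset.mem_compl.1 hy
        have hstep : ∀ t ∈ LB (Bᶜ.erase y), Wf ρbar (t ++ [y]) univ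
            = Wf ρbar t univ * gf ρbar y (insert y B) := by
          intro t ht
          rw [mem_LB'] at ht
          rw [Wf_append]
          have hset : (univ : Finset X) \ t.toFinset = insert y B := by
            rw [ht.2]
            ext z
            simp only [Finset.mem_sdiff, Finset.mem_univ, true_and, Finset.mem_erase,
              Finset.mem_compl, Finset.mem_insert]
            tauto
          rw [hset, Wf_cons, Wf_nil, mul_one]
        rw [Finset.sum_congr rfl hstep, ← Finset.sum_mul]
        have hMf : ∑ t ∈ LB (Bᶜ.erase y), Wf ρbar t univ = ff ρbar (insert y B) := by
          have hcompl : (insert y B)ᶜ = Bᶜ.erase y := Finset.compl_insert (a := y) (s := B)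
          rw [← hcompl]
          apply ih ((insert y B)ᶜ).card _ _ rfl (Finset.insert_nonempty _ _)
          rw [hcompl, ← hcard]
          exact Finset.card_erase_lt_of_mem hy
        rw [hMf]
        rcases eq_or_ne (ff ρbar (insert y B)) 0 with hf0 | hf0
        · have hq0 : qf ρbar y (insert y B) = 0 := by
            have h1 := hBM _ (Finset.insert_nonempty y B) y (Finset.mem_insert_self y B)
            have h2 := qf_le_ff ρbar hBM (Finset.insert_nonempty y B)
              (Finset.mem_insert_self y B)
            rw [hf0] at h2
            linarith
          rw [hf0, hq0, zero_mul]
        · rw [gf, if_neg hf0, mul_div_cancel₀ _ hf0]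
      rw [Finset.sum_congr rfl hterm]
      have hcons := conservation ρbar hprob B hB
      rw [if_neg hne] at hcons
      linarith

end hyp

section listdecomp

lemma takeWhile_ne_of_not_mem (x : X) (t : List X) :
    ∀ p : List X, x ∉ p →
      (p ++ x :: t).takeWhile (fun a => decide (a ≠ x)) = p := by
  intro p
  induction p with
  | nil => intro _; simp
  | cons a p' ih =>
    intro hx
    have hax : a ≠ x := fun h => hx (by simp [h])
    have hx' : x ∉ p' := fun h => hx (by simp [h])
    simp only [List.cons_append, List.takeWhile_cons, decide_eq_true_eq]
    rw [if_pos hax, ih hx']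

lemma dropWhile_ne_of_not_mem (x : X) (t : List X) :
    ∀ p : List X, x ∉ p →
      (p ++ x :: t).dropWhile (fun a => decide (a ≠ x)) = x :: t := by
  intro p
  induction p with
  | nil => intro _; simp
  | cons a p' ih =>
    intro hx
    have hax : a ≠ x := fun h => hx (by simp [h])
    have hx' : x ∉ p' := fun h => hx (by simp [h])
    simp only [List.cons_append]
    rw [List.dropWhile_cons_of_pos (by simp [hax]), ih hx']

lemma dropWhile_ne_cons {l : List X} {x : X} (hx : x ∈ l) :
    l.dropWhile (fun a => decide (a ≠ x))
      = x :: (l.dropWhile (fun a => decide (a ≠ x))).tail := by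
  induction l with
  | nil => simp at hx
  | cons a t ih =>
    rcases eq_or_ne a x with rfl | hax
    · rw [List.dropWhile_cons_of_neg (by simp)]
      rfl
    · rw [List.dropWhile_cons_of_pos (by simp [hax])]
      refine ih ?_
      rcases List.mem_cons.1 hx with h | h
      · exact absurd h.symm hax
      · exact h

lemma x_not_mem_takeWhile_ne (l : List X) (x : X) :
    x ∉ l.takeWhile (fun a => decide (a ≠ x)) := by
  intro h
  have := List.mem_takeWhile_imp h
  simp at this

/-- The set of not-yet-removed elements at the time `x` is removed. -/
def nodeOf (x : X) (l : List X) : Finset X :=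
  (l.dropWhile (fun a => decide (a ≠ x))).toFinset

end listdecomp

section hyp2

variable (ρbar : Finset X → X → ℝ)
variable (hprob : ∀ B : Finset X, B.Nonempty →
    (∀ x, 0 ≤ ρbar B x) ∧ (∀ x ∉ B, ρbar B x = 0) ∧ ∑ x ∈ B, ρbar B x = 1)
variable (hBM : ∀ B : Finset X, B.Nonempty → ∀ x ∈ B, 0 ≤ qf ρbar x B)

include hprob hBM in
lemma total_eq_qf (B' : Finset X) (x : X) (hx : x ∈ B') :
    ∑ l ∈ LB (univ : Finset X), (if nodeOf x l = B' then Wf ρbar l univ else 0)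
      = qf ρbar x B' := by
  haveI : Nonempty X := ⟨x⟩
  have hB'ne : B'.Nonempty := ⟨x, hx⟩
  rw [← Finset.sum_filter]
  have hbij : ∑ l ∈ (LB (univ : Finset X)).filter (fun l => nodeOf x l = B'),
      Wf ρbar l univ
      = ∑ pt ∈ (LB B'ᶜ) ×ˢ (LB (B'.erase x)), Wf ρbar (pt.1 ++ x :: pt.2) univ := by
    refine Finset.sum_nbij'
      (fun l => (l.takeWhile (fun a => decide (a ≠ x)),
                 (l.dropWhile (fun a => decide (a ≠ x))).tail))
      (fun pt => pt.1 ++ x :: pt.2) ?_ ?_ ?_ ?_ ?_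
    · intro l hl
      rw [Finset.mem_filter] at hl
      obtain ⟨hl1, hl2⟩ := hl
      rw [mem_LB'] at hl1
      obtain ⟨hnd, hfin⟩ := hl1
      have hxl : x ∈ l := by rw [← List.mem_toFinset, hfin]; exact Finset.mem_univ x
      set tw := l.takeWhile (fun a => decide (a ≠ x)) with htw
      set dw := l.dropWhile (fun a => decide (a ≠ x)) with hdw
      have hsplit : tw ++ dw = l := by
        rw [htw, hdw]; exact List.takeWhile_append_dropWhile
      have hcons : dw = x :: dw.tail := dropWhile_ne_cons hxl
      have hnd' : (tw ++ dw).Nodup := by rw [hsplit]; exact hnd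
      have hndtw := (List.nodup_append.1 hnd').1
      have hnddw := (List.nodup_append.1 hnd').2.1
      have hdisj := (List.nodup_append.1 hnd').2.2
      have hnode : dw.toFinset = B' := hl2
      rw [Finset.mem_product]
      constructor
      · rw [mem_LB']
        refine ⟨hndtw, ?_⟩
        ext z
        simp only [List.mem_toFinset, Finset.mem_compl]
        constructor
        · intro hz hzB'
          rw [← hnode, List.mem_toFinset] at hzB'
          exact hdisj z hz z hzB' rfl
        · intro hz
          have hzl : z ∈ l := by rw [← List.mem_toFinset, hfin]; exact Finset.mem_univ z
          rw [← hsplit, List.mem_append] at hzl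
          rcases hzl with h | h
          · exact h
          · exact absurd (hnode ▸ List.mem_toFinset.2 h) hz
      · rw [mem_LB']
        rw [hcons] at hnddw
        have hxtail : x ∉ dw.tail := (List.nodup_cons.1 hnddw).1
        have hndtail : dw.tail.Nodup := (List.nodup_cons.1 hnddw).2
        refine ⟨hndtail, ?_⟩
        have hins : insert x dw.tail.toFinset = B' := by
          rw [← hnode, hcons]
          simp
        rw [← hins, Finset.erase_insert (by rw [List.mem_toFinset]; exact hxtail)]
    · intro pt hpt
      rw [Finset.mem_product, mem_LB', mem_LB'] at hpt
      obtain ⟨⟨hnd1, hf1⟩, ⟨hnd2, hf2⟩⟩ := hpt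
      have hxt : x ∉ pt.2 := fun h => by
        have := hf2 ▸ List.mem_toFinset.2 h
        exact (Finset.mem_erase.1 this).1 rfl
      have hxp : x ∉ pt.1 := fun h => by
        have := hf1 ▸ List.mem_toFinset.2 h
        exact (Finset.mem_compl.1 this) hx
      rw [Finset.mem_filter]
      constructor
      · rw [mem_LB']
        constructor
        · rw [List.nodup_append]
          refine ⟨hnd1, List.nodup_cons.2 ⟨hxt, hnd2⟩, ?_⟩
          intro a ha b ha' hab
          subst hab
          have h1 : a ∈ B'ᶜ := hf1 ▸ List.mem_toFinset.2 ha
          rcases List.mem_cons.1 ha' with rfl | h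
          · exact (Finset.mem_compl.1 h1) hx
          · have h2 : a ∈ B'.erase x := hf2 ▸ List.mem_toFinset.2 h
            exact (Finset.mem_compl.1 h1) (Finset.mem_of_mem_erase h2)
        · ext z
          simp only [List.toFinset_append, List.toFinset_cons, Finset.mem_union,
            Finset.mem_insert, hf1, hf2, Finset.mem_compl, Finset.mem_erase]
          constructor
          · intro _; exact Finset.mem_univ z
          · intro _
            by_cases hzB : z ∈ B'
            · rcases eq_or_ne z x with rfl | hzx
              · right; left; rfl
              · right; right; exact ⟨hzx, hzB⟩
            · left; exact hzB
      · unfold nodeOf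
        rw [dropWhile_ne_of_not_mem x pt.2 pt.1 hxp]
        simp only [List.toFinset_cons, hf2]
        exact Finset.insert_erase hx
    · intro l hl
      rw [Finset.mem_filter] at hl
      obtain ⟨hl1, _⟩ := hl
      rw [mem_LB'] at hl1
      have hxl : x ∈ l := by
        rw [← List.mem_toFinset, hl1.2]; exact Finset.mem_univ x
      simp only
      rw [← dropWhile_ne_cons hxl]
      exact List.takeWhile_append_dropWhile
    · intro pt hpt
      rw [Finset.mem_product, mem_LB', mem_LB'] at hpt
      obtain ⟨⟨hnd1, hf1⟩, ⟨_, hf2⟩⟩ := hpt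
      have hxp : x ∉ pt.1 := fun h => by
        have := hf1 ▸ List.mem_toFinset.2 h
        exact (Finset.mem_compl.1 this) hx
      rw [takeWhile_ne_of_not_mem x pt.2 pt.1 hxp,
        dropWhile_ne_of_not_mem x pt.2 pt.1 hxp]
      rfl
    · intro l hl
      rw [Finset.mem_filter] at hl
      obtain ⟨hl1, _⟩ := hl
      rw [mem_LB'] at hl1
      have hxl : x ∈ l := by
        rw [← List.mem_toFinset, hl1.2]; exact Finset.mem_univ x
      simp only
      congr 1
      rw [← dropWhile_ne_cons hxl]
      exact (List.takeWhile_append_dropWhile).symm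
  rw [hbij]
  rw [Finset.sum_product]
  have hterm : ∀ p ∈ LB B'ᶜ, ∀ t ∈ LB (B'.erase x),
      Wf ρbar (p ++ x :: t) univ
        = Wf ρbar p univ * (gf ρbar x B' * Wf ρbar t (B'.erase x)) := by
    intro p hp t _
    rw [mem_LB'] at hp
    rw [Wf_append]
    have hset : (univ : Finset X) \ p.toFinset = B' := by
      rw [hp.2]
      ext z
      simp
    rw [hset, Wf_cons]
  rw [Finset.sum_congr rfl (fun p hp => Finset.sum_congr rfl (fun t ht => hterm p hp t ht))]
  have hfact : ∀ p ∈ LB B'ᶜ, ∑ t ∈ LB (B'.erase x),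
      Wf ρbar p univ * (gf ρbar x B' * Wf ρbar t (B'.erase x))
      = Wf ρbar p univ * gf ρbar x B' * ∑ t ∈ LB (B'.erase x), Wf ρbar t (B'.erase x) := by
    intro p _
    rw [Finset.mul_sum]
    apply Finset.sum_congr rfl
    intro t _
    ring
  rw [Finset.sum_congr rfl hfact, ← Finset.sum_mul, ← Finset.sum_mul]
  rcases eq_or_ne (qf ρbar x B') 0 with hq0 | hq0
  · have hg0 : gf ρbar x B' = 0 := by
      unfold gf
      rw [hq0]
      split <;> simp
    rw [hg0, hq0]
    ring
  · have hqpos : 0 < qf ρbar x B' := (hBM B' hB'ne x hx).lt_of_ne (Ne.symm hq0)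
    have hfne : ff ρbar B' ≠ 0 := by
      have := qf_le_ff ρbar hBM hB'ne hx
      intro h0
      rw [h0] at this
      linarith
    have hM : ∑ p ∈ LB B'ᶜ, Wf ρbar p univ = ff ρbar B' := Mf_eq_ff ρbar hprob hBM B' hB'ne
    have hH : ∑ t ∈ LB (B'.erase x), Wf ρbar t (B'.erase x) = 1 := by
      apply Hsum_one ρbar hprob hBM
      rcases eq_or_ne (B'.erase x) ∅ with h | h
      · exact Or.inl h
      · right
        have hEne : (B'.erase x).Nonempty := Finset.nonempty_iff_ne_empty.2 h
        have hxin : x ∈ (B'.erase x)ᶜ := by simp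
        have hcons := conservation ρbar hprob (B'.erase x) hEne
        have hBneq : B'.erase x ≠ univ := fun h2 => by
          have : x ∈ B'.erase x := h2 ▸ Finset.mem_univ x
          simp at this
        rw [if_neg hBneq] at hcons
        have hge : qf ρbar x (insert x (B'.erase x)) ≤
            ∑ y ∈ (B'.erase x)ᶜ, qf ρbar y (insert y (B'.erase x)) :=
          Finset.single_le_sum
            (f := fun y => qf ρbar y (insert y (B'.erase x)))
            (fun y _ => hBM _ (Finset.insert_nonempty _ _) y (Finset.mem_insert_self _ _))
            hxin
        rw [Finset.insert_erase hx] at hge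
        intro h0
        rw [h0] at hcons
        have hz : ∑ y ∈ (B'.erase x)ᶜ, qf ρbar y (insert y (B'.erase x)) = 0 := by linarith
        rw [hz] at hge
        linarith
    rw [hM, hH, mul_one, gf, if_neg hfne, mul_div_cancel₀ _ hfne]

end hyp2

section hyp
variable (ρbar : Finset X → X → ℝ)
variable (hprob : ∀ B : Finset X, B.Nonempty →
    (∀ x, 0 ≤ ρbar B x) ∧ (∀ x ∉ B, ρbar B x = 0) ∧ ∑ x ∈ B, ρbar B x = 1)
variable (hBM : ∀ B : Finset X, B.Nonempty → ∀ x ∈ B, 0 ≤ qf ρbar x B)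

lemma sum_qf_supersets (B : Finset X) (x : X) :
    ∑ B' ∈ univ.filter (fun B' : Finset X => B ⊆ B'), qf ρbar x B' = ρbar B x := by
  unfold qf
  rw [Finset.sum_filter]
  have h1 : ∀ B' : Finset X,
      (if B ⊆ B' then ∑ B'' ∈ univ.filter (fun B'' : Finset X => B' ⊆ B''),
          (-1:ℝ)^((B'' \ B').card) * ρbar B'' x else 0)
      = ∑ B'' ∈ (univ : Finset (Finset X)),
          (if B ⊆ B' ∧ B' ⊆ B'' then (-1:ℝ)^((B'' \ B').card) * ρbar B'' x else 0) := by
    intro B'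
    split
    · rename_i h
      rw [Finset.sum_filter]
      exact Finset.sum_congr rfl (fun B'' _ => by simp [h])
    · rename_i h
      symm
      apply Finset.sum_eq_zero
      intro B'' _
      rw [if_neg (fun hc => h hc.1)]
  rw [Finset.sum_congr rfl (fun B' _ => h1 B'), Finset.sum_comm]
  have h2 : ∀ B'' : Finset X,
      ∑ B' ∈ (univ : Finset (Finset X)),
        (if B ⊆ B' ∧ B' ⊆ B'' then (-1:ℝ)^((B'' \ B').card) * ρbar B'' x else 0)
      = (if B = B'' then 1 else 0) * ρbar B'' x := by
    intro B''
    rw [← kernel_above B B'', Finset.sum_filter, Finset.sum_mul]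
    apply Finset.sum_congr rfl
    intro B' _
    split <;> simp
  rw [Finset.sum_congr rfl (fun B'' _ => h2 B'')]
  rw [Finset.sum_congr rfl (fun B'' _ => by rw [ite_mul, one_mul, zero_mul])]
  simp

end hyp

section bridge

/-- The non-strict companion of a strict linear order. -/
def sRel (r : StrictLinOn X) (a b : X) : Prop := r.val a b = true ∨ a = b

instance sRel_dec (r : StrictLinOn X) : DecidableRel (sRel r) := fun a b =>
  inferInstanceAs (Decidable (r.val a b = true ∨ a = b))

lemma r_asymm (r : StrictLinOn X) {a b : X} (h1 : r.val a b = true)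
    (h2 : r.val b a = true) : False :=
  r.2.irrefl a (r.2.trans _ _ _ h1 h2)

instance sRel_trans (r : StrictLinOn X) : IsTrans X (sRel r) := by
  constructor
  rintro a b c (hab | rfl) (hbc | rfl)
  · exact Or.inl (r.2.trans _ _ _ hab hbc)
  · exact Or.inl hab
  · exact Or.inl hbc
  · exact Or.inr rfl

instance sRel_antisymm (r : StrictLinOn X) : IsAntisymm X (sRel r) := by
  constructor
  rintro a b (hab | rfl) (hba | h)
  · exact absurd (r_asymm r hab hba) (fun h => h)
  · exact h.symm
  · rfl
  · rfl

instance sRel_total (r : StrictLinOn X) : IsTotal X (sRel r) := by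
  constructor
  intro a b
  rcases (haveI := r.2; trichotomous_of (fun a b => r.val a b = true) a b) with h | h | h
  · exact Or.inl (Or.inl h)
  · exact Or.inl (Or.inr h)
  · exact Or.inr (Or.inl h)

/-- Enumeration of `X` in decreasing `r`-order (maximum first). -/
def sortList (r : StrictLinOn X) : List X := Finset.sort (univ : Finset X) (sRel r)

lemma sortList_nodup (r : StrictLinOn X) : (sortList r).Nodup := Finset.sort_nodup _ _

lemma sortList_toFinset (r : StrictLinOn X) : (sortList r).toFinset = univ :=
  Finset.sort_toFinset _ _

lemma sortList_mem_LB (r : StrictLinOn X) : sortList r ∈ LB (univ : Finset X) :=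
  mem_LB'.2 ⟨sortList_nodup r, sortList_toFinset r⟩

lemma sortList_sorted (r : StrictLinOn X) : List.Pairwise (sRel r) (sortList r) :=
  Finset.pairwise_sort _ _

lemma nodeOf_sortList (r : StrictLinOn X) (x : X) :
    nodeOf x (sortList r) = univ.filter (fun y => y = x ∨ r.val x y = true) := by
  set l := sortList r with hl
  have hnd : l.Nodup := sortList_nodup r
  have hxl : x ∈ l := by
    rw [← List.mem_toFinset, sortList_toFinset]; exact Finset.mem_univ x
  set p := l.takeWhile (fun a => decide (a ≠ x)) with hp
  set d := l.dropWhile (fun a => decide (a ≠ x)) with hd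
  have hsplit : p ++ d = l := by rw [hp, hd]; exact List.takeWhile_append_dropWhile
  have hcons : d = x :: d.tail := dropWhile_ne_cons hxl
  have hpair : List.Pairwise (sRel r) (p ++ d) := by
    rw [hsplit]; exact sortList_sorted r
  have hcross := (List.pairwise_append.1 hpair).2.2
  have hpaird := (List.pairwise_append.1 hpair).2.1
  ext y
  unfold nodeOf
  rw [← hd, Finset.mem_filter, List.mem_toFinset]
  simp only [Finset.mem_univ, true_and]
  constructor
  · intro hyd
    rw [hcons] at hyd hpaird
    rcases List.mem_cons.1 hyd with rfl | hyt
    · exact Or.inl rfl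
    · have := (List.pairwise_cons.1 hpaird).1 y hyt
      rcases this with h | rfl
      · exact Or.inr h
      · exact Or.inl rfl
  · intro hy
    have hyl : y ∈ l := by
      rw [← List.mem_toFinset, sortList_toFinset]; exact Finset.mem_univ y
    rw [← hsplit, List.mem_append] at hyl
    rcases hyl with hyp | hyd
    · exfalso
      have hxd : x ∈ d := by rw [hcons]; exact List.mem_cons_self
      have hsyx := hcross y hyp x hxd
      rcases hy with h1 | hxy
      · subst h1
        rw [hp] at hyp
        exact x_not_mem_takeWhile_ne l y hyp
      · rcases hsyx with hyx | h2
        · exact r_asymm r hxy hyx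
        · subst h2
          exact r.2.irrefl y hxy
    · exact hyd

/-- Build a strict linear order from an enumeration of `X`. -/
def fromList (l : List X) (hnd : l.Nodup) (hfin : l.toFinset = univ) : StrictLinOn X := by
  refine ⟨fun a b => decide (l.idxOf a < l.idxOf b), ?_⟩
  have hmem : ∀ a : X, a ∈ l := fun a => by
    rw [← List.mem_toFinset, hfin]; exact Finset.mem_univ a
  refine { trichotomous := ?_, irrefl := ?_, trans := ?_ }
  · intro a b
    simp only [decide_eq_true_eq]
    intro h1 h2
    exact (List.idxOf_inj (hmem a)).1 (by omega)
  · intro a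
    simp
  · intro a b c hab hbc
    simp only [decide_eq_true_eq] at hab hbc ⊢
    omega

lemma fromList_sortList (r : StrictLinOn X) :
    fromList (sortList r) (sortList_nodup r) (sortList_toFinset r) = r := by
  apply Subtype.ext
  funext a b
  set l := sortList r with hl
  have hmem : ∀ a : X, a ∈ l := fun a => by
    rw [← List.mem_toFinset, sortList_toFinset]; exact Finset.mem_univ a
  have key : ∀ a b : X, l.idxOf a < l.idxOf b → r.val a b = true := by
    intro a b hab
    have hne : a ≠ b := fun h => by rw [h] at hab; exact Nat.lt_irrefl _ hab
    have hia : l.idxOf a < l.length := List.idxOf_lt_length_iff.2 (hmem a)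
    have hib : l.idxOf b < l.length := List.idxOf_lt_length_iff.2 (hmem b)
    have hs := (sortList_sorted r).rel_get_of_lt
      (a := ⟨l.idxOf a, hia⟩) (b := ⟨l.idxOf b, hib⟩) hab
    rw [List.idxOf_get, List.idxOf_get] at hs
    rcases hs with h | rfl
    · exact h
    · exact absurd rfl hne
  show decide (l.idxOf a < l.idxOf b) = r.val a b
  cases hb : r.val a b with
  | false =>
    apply decide_eq_false
    intro hlt
    have := key a b hlt
    rw [hb] at this
    exact Bool.false_ne_true this
  | true =>
    apply decide_eq_true
    have hne : a ≠ b := fun h => r.2.irrefl b (h ▸ hb)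
    rcases Nat.lt_trichotomy (l.idxOf a) (l.idxOf b) with h | h | h
    · exact h
    · exact absurd ((List.idxOf_inj (hmem a)).1 h) hne
    · exact absurd (r_asymm r hb (key b a h)) (fun f => f)

lemma sortList_fromList (l : List X) (hnd : l.Nodup) (hfin : l.toFinset = univ) :
    sortList (fromList l hnd hfin) = l := by
  set r := fromList l hnd hfin with hr
  apply (fun hp h1 h2 => List.Perm.eq_of_pairwise' (r := sRel r) h1 h2 hp)
  · exact perm_of_nodup_toFinset_eq (sortList_nodup r) hnd
      (by rw [sortList_toFinset, hfin])
  · exact sortList_sorted r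
  · rw [List.pairwise_iff_get]
    intro i j hij
    left
    show decide (l.idxOf (l.get i) < l.idxOf (l.get j)) = true
    rw [decide_eq_true_iff]
    rw [List.get_eq_getElem, List.get_eq_getElem,
      List.Nodup.idxOf_getElem hnd _ _, List.Nodup.idxOf_getElem hnd _ _]
    exact hij

lemma sum_orders_eq_sum_LB (F : StrictLinOn X → ℝ) (G : List X → ℝ)
    (hFG : ∀ r : StrictLinOn X, F r = G (sortList r)) :
    ∑ r : StrictLinOn X, F r = ∑ l ∈ LB (univ : Finset X), G l := by
  symm
  apply Finset.sum_bij (i := fun l hl => fromList l (mem_LB'.1 hl).1 (mem_LB'.1 hl).2)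
  · intro l hl
    exact Finset.mem_univ _
  · intro l hl l' hl' heq
    have := congrArg sortList heq
    rwa [sortList_fromList, sortList_fromList] at this
  · intro r _
    exact ⟨sortList r, sortList_mem_LB r, fromList_sortList r⟩
  · intro l hl
    rw [hFG, sortList_fromList]

end bridge

section maxes

lemma sortList_indexOf_lt (r : StrictLinOn X) {a b : X}
    (hab : (sortList r).idxOf a < (sortList r).idxOf b) : r.val a b = true := by
  set l := sortList r with hl
  have hmem : ∀ a : X, a ∈ l := fun a => by
    rw [← List.mem_toFinset, sortList_toFinset]; exact Finset.mem_univ a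
  have hne : a ≠ b := fun h => by rw [h] at hab; exact Nat.lt_irrefl _ hab
  have hia : l.idxOf a < l.length := List.idxOf_lt_length_iff.2 (hmem a)
  have hib : l.idxOf b < l.length := List.idxOf_lt_length_iff.2 (hmem b)
  have hs := (sortList_sorted r).rel_get_of_lt
    (a := ⟨l.idxOf a, hia⟩) (b := ⟨l.idxOf b, hib⟩) hab
  rw [List.idxOf_get, List.idxOf_get] at hs
  rcases hs with h | h
  · exact h
  · exact absurd h hne

lemma exists_rmax (r : StrictLinOn X) (B : Finset X) (hB : B.Nonempty) :
    ∃ m ∈ B, ∀ y ∈ B, y ≠ m → r.val m y = true := by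
  obtain ⟨m, hm, hmin⟩ := Finset.exists_min_image B (fun y => (sortList r).idxOf y) hB
  refine ⟨m, hm, fun y hy hne => ?_⟩
  apply sortList_indexOf_lt r
  have hle := hmin y hy
  have hmem : ∀ a : X, a ∈ sortList r := fun a => by
    rw [← List.mem_toFinset, sortList_toFinset]; exact Finset.mem_univ a
  have : (sortList r).idxOf m ≠ (sortList r).idxOf y :=
    fun h => hne ((List.idxOf_inj (hmem m)).1 h).symm
  omega

lemma sum_ind_eq_one (r : StrictLinOn X) (B : Finset X) (hB : B.Nonempty) :
    ∑ x ∈ B, (if ∀ y ∈ B, y ≠ x → r.val x y = true then (1:ℝ) else 0) = 1 := by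
  obtain ⟨m, hm, hmax⟩ := exists_rmax r B hB
  rw [Finset.sum_eq_single_of_mem m hm]
  · rw [if_pos hmax]
  · intro x hx hxm
    rw [if_neg]
    intro hcon
    exact r_asymm r (hcon m hm (fun h => hxm h.symm)) (hmax x hx hxm)

end maxes

section hyp3
variable (ρbar : Finset X → X → ℝ)
variable (hprob : ∀ B : Finset X, B.Nonempty →
    (∀ x, 0 ≤ ρbar B x) ∧ (∀ x ∉ B, ρbar B x = 0) ∧ ∑ x ∈ B, ρbar B x = 1)
variable (hBM : ∀ B : Finset X, B.Nonempty → ∀ x ∈ B, 0 ≤ qf ρbar x B)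

include hprob hBM in
lemma backward_marginal (B : Finset X) (x : X) (hx : x ∈ B) :
    ∑ r : StrictLinOn X, Wf ρbar (sortList r) univ *
      (if ∀ y ∈ B, y ≠ x → r.val x y = true then (1:ℝ) else 0)
      = ρbar B x := by
  have hstep1 : ∀ r : StrictLinOn X,
      Wf ρbar (sortList r) univ * (if ∀ y ∈ B, y ≠ x → r.val x y = true then (1:ℝ) else 0)
      = ∑ B' ∈ univ.filter (fun B' : Finset X => B ⊆ B'),
          (if nodeOf x (sortList r) = B' then Wf ρbar (sortList r) univ else 0) := by
    intro r
    have hcond : (∀ y ∈ B, y ≠ x → r.val x y = true) ↔ B ⊆ nodeOf x (sortList r) := by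
      rw [nodeOf_sortList]
      constructor
      · intro h y hy
        rw [Finset.mem_filter]
        refine ⟨Finset.mem_univ y, ?_⟩
        by_cases hyx : y = x
        · exact Or.inl hyx
        · exact Or.inr (h y hy hyx)
      · intro h y hy hyx
        have := (Finset.mem_filter.1 (h hy)).2
        rcases this with h1 | h1
        · exact absurd h1 hyx
        · exact h1
    rw [Finset.sum_ite_eq]
    simp only [Finset.mem_filter, Finset.mem_univ, true_and]
    by_cases h : ∀ y ∈ B, y ≠ x → r.val x y = true
    · rw [if_pos h, if_pos (hcond.1 h), mul_one]
    · rw [if_neg h, if_neg (fun hc => h (hcond.2 hc)), mul_zero]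
  rw [Finset.sum_congr rfl (fun r _ => hstep1 r), Finset.sum_comm]
  have hstep2 : ∀ B' ∈ univ.filter (fun B' : Finset X => B ⊆ B'),
      ∑ r : StrictLinOn X,
        (if nodeOf x (sortList r) = B' then Wf ρbar (sortList r) univ else 0)
      = qf ρbar x B' := by
    intro B' hB'
    rw [sum_orders_eq_sum_LB _
      (fun l => if nodeOf x l = B' then Wf ρbar l univ else 0) (fun r => rfl)]
    exact total_eq_qf ρbar hprob hBM B' x ((Finset.mem_filter.1 hB').2 hx)
  rw [Finset.sum_congr rfl hstep2]
  exact sum_qf_supersets ρbar B x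

end hyp3

end BMAux


end BMAuxDev

open BMAux in
/-- static RUM with limited menu variation and a primitive order `≻₀`.
A stochastic choice function `ρ` on the observed menus `J` is rationalized by a
distribution over linear orders extending `≻₀` (i) if and only if it admits an extension
`ρ̄` to all nonempty menus that agrees with `ρ`, is IU-consistent, and satisfies the
Block–Marschak inequalities (ii). -/
theorem static_rum_blockMarschak_characterization
    (X : Type*) [Fintype X] [DecidableEq X]
    (r₀ : X → X → Prop) (hr₀ : IsStrictOrder X r₀)
    (J : Set (Finset X)) (hJ : ∀ B ∈ J, B.Nonempty)
    (ρ : Finset X → X → ℝ)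
    (hρ : ∀ B ∈ J, (∀ x, 0 ≤ ρ B x) ∧ (∀ x ∉ B, ρ B x = 0) ∧ ∑ x ∈ B, ρ B x = 1) :
    (∃ ν : StrictLinOn X → ℝ, 0 ≤ ν ∧ ∑ r, ν r = 1 ∧
        (∀ r, ν r ≠ 0 → ExtendsOrder r r₀) ∧
        ∀ B ∈ J, ∀ x ∈ B, ρ B x =
          ∑ r : StrictLinOn X, ν r *
            (if ∀ y ∈ B, y ≠ x → r.val x y = true then 1 else 0)) ↔
      (∃ ρbar : Finset X → X → ℝ,
        (∀ B : Finset X, B.Nonempty →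
          (∀ x, 0 ≤ ρbar B x) ∧ (∀ x ∉ B, ρbar B x = 0) ∧ ∑ x ∈ B, ρbar B x = 1) ∧
        (∀ B ∈ J, ∀ x, ρbar B x = ρ B x) ∧
        (∀ B : Finset X, ∀ x ∈ B, (∃ y ∈ B, r₀ y x) → ρbar B x = 0) ∧
        (∀ B : Finset X, B.Nonempty → ∀ x ∈ B,
          0 ≤ ∑ B' ∈ Finset.univ.filter (fun B' : Finset X => B ⊆ B'),
            (-1 : ℝ) ^ ((B' \ B).card) * ρbar B' x)) := by
  classical
  constructor
  · -- (i) → (ii)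
    rintro ⟨ν, hν0, hν1, hνext, hνmarg⟩
    have hν0' : ∀ r, 0 ≤ ν r := fun r => hν0 r
    set S : StrictLinOn X → Finset X → X → ℝ := fun r B x =>
      (if ∀ y ∈ B, y ≠ x → r.val x y = true then (1:ℝ) else 0) with hS
    refine ⟨fun B x => if x ∈ B then ∑ r : StrictLinOn X, ν r * S r B x else 0,
      ?_, ?_, ?_, ?_⟩
    · intro B hB
      refine ⟨?_, ?_, ?_⟩
      · intro x
        dsimp only
        split
        · apply Finset.sum_nonneg
          intro r _
          apply mul_nonneg (hν0' r)
          simp only [hS]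
          split <;> norm_num
        · exact le_refl 0
      · intro x hx
        dsimp only
        rw [if_neg hx]
      · dsimp only
        have h1 : ∀ x ∈ B, (if x ∈ B then ∑ r : StrictLinOn X, ν r * S r B x else 0)
            = ∑ r : StrictLinOn X, ν r * S r B x := fun x hx => if_pos hx
        rw [Finset.sum_congr rfl h1, Finset.sum_comm]
        have h2 : ∀ r : StrictLinOn X, ∑ x ∈ B, ν r * S r B x = ν r := by
          intro r
          rw [← Finset.mul_sum, hS]
          simp only
          rw [sum_ind_eq_one r B hB, mul_one]
        rw [Finset.sum_congr rfl (fun r _ => h2 r), hν1]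
    · intro B hB x
      dsimp only
      by_cases hx : x ∈ B
      · rw [if_pos hx, ← hνmarg B hB x hx]
      · rw [if_neg hx, (hρ B hB).2.1 x hx]
    · rintro B x hx ⟨y, hy, hr₀yx⟩
      dsimp only
      rw [if_pos hx]
      apply Finset.sum_eq_zero
      intro r _
      rcases eq_or_ne (ν r) 0 with h | h
      · rw [h, zero_mul]
      · have hext := hνext r h
        have hyx : r.val y x = true := hext y x hr₀yx
        have hne : y ≠ x := fun hh => (hr₀.toIrrefl.irrefl x) (hh ▸ hr₀yx)
        have hS0 : S r B x = 0 := by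
          simp only [hS]
          rw [if_neg]
          intro hcon
          exact r_asymm r (hcon y hy hne) hyx
        rw [hS0, mul_zero]
    · intro B _ x hxB
      dsimp only
      have h1 : ∀ B' ∈ Finset.univ.filter (fun B' : Finset X => B ⊆ B'),
          (-1:ℝ) ^ ((B' \ B).card) *
            (if x ∈ B' then ∑ r : StrictLinOn X, ν r * S r B' x else 0)
          = ∑ r : StrictLinOn X, ν r * ((-1:ℝ) ^ ((B' \ B).card) * S r B' x) := by
        intro B' hB'
        have hxB' : x ∈ B' := (Finset.mem_filter.1 hB').2 hxB
        rw [if_pos hxB', Finset.mul_sum]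
        exact Finset.sum_congr rfl (fun r _ => by ring)
      rw [Finset.sum_congr rfl h1, Finset.sum_comm]
      apply Finset.sum_nonneg
      intro r _
      rw [← Finset.mul_sum]
      apply mul_nonneg (hν0' r)
      have h2 : ∀ B' : Finset X, S r B' x
          = (if B' ⊆ Finset.univ.filter (fun y => y = x ∨ r.val x y = true) then (1:ℝ) else 0) := by
        intro B'
        simp only [hS]
        congr 1
        apply propext
        constructor
        · intro h y hy
          rw [Finset.mem_filter]
          refine ⟨Finset.mem_univ y, ?_⟩
          by_cases hyx : y = x
          · exact Or.inl hyx
          · exact Or.inr (h y hy hyx)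
        · intro h y hy hyx
          rcases (Finset.mem_filter.1 (h hy)).2 with h' | h'
          · exact absurd h' hyx
          · exact h'
      have h3 : ∑ B' ∈ Finset.univ.filter (fun B' : Finset X => B ⊆ B'),
          (-1:ℝ) ^ ((B' \ B).card) * S r B' x
          = ∑ B' ∈ Finset.univ.filter (fun B' : Finset X => B ⊆ B' ∧
              B' ⊆ Finset.univ.filter (fun y => y = x ∨ r.val x y = true)),
              (-1:ℝ) ^ ((B' \ B).card) := by
        rw [← Finset.filter_filter, Finset.sum_filter (s := Finset.univ.filter
          (fun B' : Finset X => B ⊆ B'))]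
        apply Finset.sum_congr rfl
        intro B' _
        rw [h2 B', mul_ite, mul_one, mul_zero]
      rw [h3, kernel_below]
      split <;> norm_num
  · -- (ii) → (i)
    rintro ⟨ρbar, hprob, hagree, hIU, hBMraw⟩
    have hBM : ∀ B : Finset X, B.Nonempty → ∀ x ∈ B, 0 ≤ qf ρbar x B := by
      intro B hB x hx
      rw [qf_def]
      exact hBMraw B hB x hx
    rcases isEmpty_or_nonempty X with hE | hNE
    · -- X empty
      have r0 : StrictLinOn X := by
        refine ⟨fun _ _ => false, ?_⟩
        refine { trichotomous := ?_, irrefl := ?_, trans := ?_ }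
        all_goals intro a
        all_goals exact isEmptyElim a
      refine ⟨fun _ => 1, ?_, ?_, ?_, ?_⟩
      · intro r
        exact zero_le_one
      · have hcard : Fintype.card (StrictLinOn X) = 1 :=
          Fintype.card_eq_one_iff.2 ⟨r0, fun y =>
            Subtype.ext (funext (fun a => isEmptyElim a))⟩
        rw [Finset.sum_const, Finset.card_univ, hcard]
        norm_num
      · intro r _ x y _
        exact isEmptyElim x
      · intro B hB x hx
        exact isEmptyElim x
    · -- X nonempty
      refine ⟨fun r => Wf ρbar (sortList r) Finset.univ, ?_, ?_, ?_, ?_⟩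
      · intro r
        exact Wf_nonneg ρbar hBM (sortList r) Finset.univ (sortList_nodup r)
          (fun a _ => Finset.mem_univ a)
      · rw [sum_orders_eq_sum_LB _ (fun l => Wf ρbar l Finset.univ) (fun r => rfl)]
        apply Hsum_one ρbar hprob hBM
        right
        rw [ff_univ ρbar hprob]
        norm_num
      · intro r hν a b hab
        have hne : a ≠ b := fun h => (hr₀.toIrrefl.irrefl b) (h ▸ hab)
        by_contra hcon
        have hba : r.val b a = true := by
          rcases (haveI := r.2; trichotomous_of (fun a b => r.val a b = true) a b) with h | h | h
          · exact absurd h hcon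
          · exact absurd h hne
          · exact h
        set l := sortList r with hl
        have hbl : b ∈ l := by
          rw [hl, ← List.mem_toFinset, sortList_toFinset]; exact Finset.mem_univ b
        have hcons := dropWhile_ne_cons hbl
        have heq : l = l.takeWhile (fun c => decide (c ≠ b)) ++
            b :: (l.dropWhile (fun c => decide (c ≠ b))).tail := by
          rw [← hcons]
          exact (List.takeWhile_append_dropWhile).symm
        have hfac := Wf_factor_ne_zero ρbar l Finset.univ hν
          (l.takeWhile (fun c => decide (c ≠ b))) b
          (l.dropWhile (fun c => decide (c ≠ b))).tail heq
        set Sset := Finset.univ \ (l.takeWhile (fun c => decide (c ≠ b))).toFinset with hSset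
        have hbS : b ∈ Sset := by
          rw [hSset, Finset.mem_sdiff]
          exact ⟨Finset.mem_univ b, fun h =>
            x_not_mem_takeWhile_ne l b (List.mem_toFinset.1 h)⟩
        have haS : a ∈ Sset := by
          rw [hSset, Finset.mem_sdiff]
          refine ⟨Finset.mem_univ a, fun h => ?_⟩
          have hatw : a ∈ l.takeWhile (fun c => decide (c ≠ b)) := List.mem_toFinset.1 h
          have hpair : List.Pairwise (sRel r) (l.takeWhile (fun c => decide (c ≠ b)) ++
              l.dropWhile (fun c => decide (c ≠ b))) := by
            rw [List.takeWhile_append_dropWhile]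
            exact sortList_sorted r
          have hbd : b ∈ l.dropWhile (fun c => decide (c ≠ b)) := by
            rw [hcons]; exact List.mem_cons_self
          have hsab := (List.pairwise_append.1 hpair).2.2 a hatw b hbd
          rcases hsab with h' | h'
          · exact hcon h'
          · exact hne h'
        have hq : qf ρbar b Sset ≠ 0 := by
          intro h0
          apply hfac
          unfold gf
          rw [h0]
          split <;> simp
        apply hq
        rw [qf_def]
        apply Finset.sum_eq_zero
        intro B' hB'
        have hsub : Sset ⊆ B' := (Finset.mem_filter.1 hB').2
        rw [hIU B' b (hsub hbS) ⟨a, hsub haS, hab⟩, mul_zero]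
      · intro B hBJ x hx
        rw [← hagree B hBJ x]
        exact (backward_marginal ρbar hprob hBM B x hx).symm

end
end

section
/- Let X^1,…,X^T be finite sets and suppose ρ̄ assigns to every menu path (B^1,…,B^T), with ∅ ≠ B^t ⊆ X^t, a probability distribution over choice paths (x^1,…,x^T) with x^t ∈ B^t, and that ρ̄ is generated by a probability distribution ν over T-tuples (≻^1,…,≻^T) of linear orders on X^1,…,X^T, i.e., ρ̄((x^t)_t | (B^t)_t) equals the ν-probability that x^t is the ≻^t-maximum of B^t for every t. Define, for each choice path and menu path, 𝔹_T = Σ_{B′ : B^T ⊆ B′ ⊆ X^T} (−1)^{|B′∖B^T|} ρ̄((x^t)_t | B^1,…,B^{T−1}, B′), and recursively for t < T, 𝔹_t = Σ_{B′ : B^t ⊆ B′ ⊆ X^t} (−1)^{|B′∖B^t|} 𝔹_{t+1} evaluated at the menu path with B^t replaced by B′. Then 𝔹_t ≥ 0 for every t ∈ {1,…,T}, every menu path, and every choice path. -/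
open Matrix

noncomputable section

/-- The period-`t` Block–Marschak operator: `(bmOp t f) B x` is the alternating sum
`Σ_{B′ ⊇ B t} (−1)^{|B′ ∖ B t|} f (B with period-t menu B′) x`. -/
def bmOp {T : ℕ} {X : Fin T → Type*} [∀ t, Fintype (X t)] [∀ t, DecidableEq (X t)]
    (t : Fin T) (f : (∀ s, Finset (X s)) → (∀ s, X s) → ℝ) :
    (∀ s, Finset (X s)) → (∀ s, X s) → ℝ :=
  fun B x =>
    ∑ B' ∈ Finset.univ.filter (fun B' : Finset (X t) => B t ⊆ B'),
      (-1 : ℝ) ^ ((B' \ B t).card) * f (Function.update B t B') x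

/-- The DRUM Block–Marschak functionals `𝔹_t` (`0`-indexed): `𝔹_t = bmOp t 𝔹_{t+1}` for
`t < T` and `𝔹_T = ρ̄`. -/
def drumBM {T : ℕ} {X : Fin T → Type*} [∀ t, Fintype (X t)] [∀ t, DecidableEq (X t)]
    (ρbar : (∀ s, Finset (X s)) → (∀ s, X s) → ℝ) :
    ℕ → (∀ s, Finset (X s)) → (∀ s, X s) → ℝ
  | t => if h : t < T then bmOp ⟨t, h⟩ (drumBM ρbar (t + 1)) else ρbar
  termination_by t => T - t
  decreasing_by omega

/-- Single-period alternating-sum identity. -/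
private lemma sign_sum_indicator {α : Type*} [Fintype α] [DecidableEq α] (B C : Finset α) :
    ∑ B' ∈ Finset.univ.filter (fun B' : Finset α => B ⊆ B'),
      (-1 : ℝ) ^ ((B' \ B).card) * (if B' ⊆ C then (1:ℝ) else 0)
      = if B = C then 1 else 0 := by
  simp only [mul_ite, mul_one, mul_zero]
  rw [Finset.sum_ite, Finset.sum_const_zero, add_zero]
  by_cases hBC : B ⊆ C
  · have hset : (Finset.univ.filter (fun B' : Finset α => B ⊆ B')).filter (fun B' => B' ⊆ C)
        = Finset.univ.filter (fun B' : Finset α => B ⊆ B' ∧ B' ⊆ C) := by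
      ext B'; simp [and_assoc]
    rw [hset]
    have hbij : ∑ B' ∈ Finset.univ.filter (fun B' : Finset α => B ⊆ B' ∧ B' ⊆ C),
        (-1 : ℝ) ^ ((B' \ B).card)
        = ∑ S ∈ (C \ B).powerset, (-1 : ℝ) ^ S.card := by
      refine Finset.sum_nbij' (fun B' => B' \ B) (fun S => B ∪ S) ?_ ?_ ?_ ?_ ?_
      · intro B' hB'
        simp only [Finset.mem_filter, Finset.mem_univ, true_and] at hB'
        exact Finset.mem_powerset.2 (Finset.sdiff_subset_sdiff hB'.2 le_rfl)
      · intro S hS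
        rw [Finset.mem_powerset] at hS
        simp only [Finset.mem_filter, Finset.mem_univ, true_and]
        exact ⟨Finset.subset_union_left, Finset.union_subset hBC
          (hS.trans Finset.sdiff_subset)⟩
      · intro B' hB'
        simp only [Finset.mem_filter, Finset.mem_univ, true_and] at hB'
        exact Finset.union_sdiff_of_subset hB'.1
      · intro S hS
        rw [Finset.mem_powerset] at hS
        show (B ∪ S) \ B = S
        rw [Finset.union_sdiff_cancel_left]
        exact Finset.disjoint_left.2 fun a ha hb => (Finset.mem_sdiff.1 (hS hb)).2 ha
      · intro B' _; rfl
    rw [hbij]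
    have h1 := Finset.sum_powerset_neg_one_pow_card (x := C \ B)
    have h2 : ∑ S ∈ (C \ B).powerset, (-1 : ℝ) ^ S.card
        = ((∑ S ∈ (C \ B).powerset, (-1 : ℤ) ^ S.card : ℤ) : ℝ) := by push_cast; rfl
    rw [h2, h1]
    have hiff : C \ B = ∅ ↔ B = C := by
      rw [Finset.sdiff_eq_empty_iff_subset]
      exact ⟨fun h => le_antisymm hBC h, fun h => h.ge⟩
    by_cases hc : B = C
    · rw [if_pos (hiff.2 hc), if_pos hc]; norm_num
    · rw [if_neg (fun he => hc (hiff.1 he)), if_neg hc]; norm_num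
  · have hempty : (Finset.univ.filter (fun B' : Finset α => B ⊆ B')).filter (fun B' => B' ⊆ C)
        = ∅ := by
      ext B'; simp only [Finset.mem_filter, Finset.mem_univ, true_and, Finset.notMem_empty,
        iff_false, not_and]
      intro h1 h2; exact hBC (h1.trans h2)
    rw [hempty, Finset.sum_empty, if_neg (fun h => hBC h.le)]

private lemma subset_iff_max {α : Type*} [Fintype α] [DecidableEq α]
    (B : Finset α) (x : α) (r : α → α → Bool) :
    (B ⊆ insert x (Finset.univ.filter fun y => r x y = true)) ↔
      (∀ y ∈ B, y ≠ x → r x y = true) := by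
  constructor
  · intro h y hy hne
    rcases Finset.mem_insert.1 (h hy) with h1 | h1
    · exact absurd h1 hne
    · exact (Finset.mem_filter.1 h1).2
  · intro h y hy
    by_cases hyx : y = x
    · subst hyx; exact Finset.mem_insert_self _ _
    · exact Finset.mem_insert_of_mem (Finset.mem_filter.2 ⟨Finset.mem_univ _, h y hy hyx⟩)

private def bmFactor {T : ℕ} {X : Fin T → Type*} [∀ t, Fintype (X t)] [∀ t, DecidableEq (X t)]
    (t : ℕ) (B : ∀ s, Finset (X s)) (x : ∀ s, X s) (p : ∀ s, StrictLinOn (X s)) (s : Fin T) :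
    ℝ :=
  if (s : ℕ) < t
    then (if B s ⊆ insert (x s) (Finset.univ.filter fun y => (p s).val (x s) y = true)
      then 1 else 0)
    else (if B s = insert (x s) (Finset.univ.filter fun y => (p s).val (x s) y = true)
      then 1 else 0)

private lemma bmFactor_nonneg {T : ℕ} {X : Fin T → Type*} [∀ t, Fintype (X t)]
    [∀ t, DecidableEq (X t)] (t : ℕ) (B : ∀ s, Finset (X s)) (x : ∀ s, X s)
    (p : ∀ s, StrictLinOn (X s)) (s : Fin T) : 0 ≤ bmFactor t B x p s := by
  unfold bmFactor; split_ifs <;> norm_num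

private lemma drumBM_formula
    (T : ℕ) (X : Fin T → Type*) [∀ t, Fintype (X t)] [∀ t, DecidableEq (X t)]
    (ρbar : (∀ t, Finset (X t)) → (∀ t, X t) → ℝ)
    (ν : (∀ t, StrictLinOn (X t)) → ℝ)
    (hgen : ∀ B : ∀ t, Finset (X t), (∀ t, (B t).Nonempty) →
      ∀ x : ∀ t, X t, (∀ t, x t ∈ B t) →
        ρbar B x = ∑ p : ∀ t, StrictLinOn (X t), ν p *
          (if ∀ t, ∀ y ∈ B t, y ≠ x t → (p t).val (x t) y = true then 1 else 0)) :
    ∀ d t, t + d = T → ∀ B : ∀ s, Finset (X s), (∀ s, (B s).Nonempty) →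
      ∀ x : ∀ s, X s, (∀ s, x s ∈ B s) →
      drumBM ρbar t B x = ∑ p : ∀ s, StrictLinOn (X s), ν p * ∏ s, bmFactor t B x p s := by
  intro d
  induction d with
  | zero =>
    intro t ht B hB x hx
    have htT : t = T := by omega
    rw [drumBM, dif_neg (by omega : ¬ t < T), hgen B hB x hx]
    refine Finset.sum_congr rfl fun p _ => ?_
    congr 1
    have : ∀ s : Fin T, bmFactor t B x p s =
        if B s ⊆ insert (x s) (Finset.univ.filter fun y => (p s).val (x s) y = true)
          then (1:ℝ) else 0 := by
      intro s; unfold bmFactor; rw [if_pos (by omega : (s : ℕ) < t)]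
    simp only [this]
    rw [Fintype.prod_boole]
    congr 1
    simp only [eq_iff_iff]
    constructor
    · intro h s; exact (subset_iff_max _ _ _).2 (h s)
    · intro h s; exact (subset_iff_max _ _ _).1 (h s)
  | succ d ih =>
    intro t ht B hB x hx
    have h : t < T := by omega
    set tF : Fin T := ⟨t, h⟩ with htF
    rw [drumBM, dif_pos h]
    show ∑ B' ∈ Finset.univ.filter (fun B' : Finset (X tF) => B tF ⊆ B'),
        (-1 : ℝ) ^ ((B' \ B tF).card) * drumBM ρbar (t + 1) (Function.update B tF B') x = _
    have hrw : ∀ B' ∈ Finset.univ.filter (fun B' : Finset (X tF) => B tF ⊆ B'),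
        (-1 : ℝ) ^ ((B' \ B tF).card) * drumBM ρbar (t + 1) (Function.update B tF B') x
        = ∑ p : ∀ s, StrictLinOn (X s), (-1 : ℝ) ^ ((B' \ B tF).card) *
            (ν p * ∏ s, bmFactor (t + 1) (Function.update B tF B') x p s) := by
      intro B' hB'
      simp only [Finset.mem_filter, Finset.mem_univ, true_and] at hB'
      rw [ih (t + 1) (by omega) (Function.update B tF B') ?_ x ?_, Finset.mul_sum]
      · intro s
        by_cases hs : s = tF
        · rw [hs, Function.update_self]; exact (hB tF).mono hB'
        · rw [Function.update_of_ne hs]; exact hB s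
      · intro s
        by_cases hs : s = tF
        · rw [hs, Function.update_self]; exact hB' (hx tF)
        · rw [Function.update_of_ne hs]; exact hx s
    rw [Finset.sum_congr rfl hrw, Finset.sum_comm]
    refine Finset.sum_congr rfl fun p _ => ?_
    -- factor the product at tF
    have hsplit : ∀ B' : Finset (X tF), B tF ⊆ B' →
        ∏ s, bmFactor (t + 1) (Function.update B tF B') x p s
        = (if B' ⊆ insert (x tF) (Finset.univ.filter fun y => (p tF).val (x tF) y = true)
            then (1:ℝ) else 0) * ∏ s ∈ Finset.univ.erase tF, bmFactor t B x p s := by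
      intro B' _
      rw [← Finset.mul_prod_erase Finset.univ _ (Finset.mem_univ tF)]
      congr 1
      · unfold bmFactor
        rw [Function.update_self, if_pos (by exact Nat.lt_succ_self t)]
      · refine Finset.prod_congr rfl fun s hs => ?_
        have hst : s ≠ tF := (Finset.mem_erase.1 hs).1
        have hvt : (s : ℕ) ≠ t := fun hc => hst (Fin.ext hc)
        unfold bmFactor
        rw [Function.update_of_ne hst]
        have : ((s : ℕ) < t + 1) ↔ ((s : ℕ) < t) := by omega
        simp only [this]
    have hgoal : ∑ B' ∈ Finset.univ.filter (fun B' : Finset (X tF) => B tF ⊆ B'),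
        (-1 : ℝ) ^ ((B' \ B tF).card) *
          (ν p * ∏ s, bmFactor (t + 1) (Function.update B tF B') x p s)
        = ν p * ((if B tF = insert (x tF) (Finset.univ.filter fun y => (p tF).val (x tF) y = true)
            then (1:ℝ) else 0) * ∏ s ∈ Finset.univ.erase tF, bmFactor t B x p s) := by
      calc ∑ B' ∈ Finset.univ.filter (fun B' : Finset (X tF) => B tF ⊆ B'),
            (-1 : ℝ) ^ ((B' \ B tF).card) *
              (ν p * ∏ s, bmFactor (t + 1) (Function.update B tF B') x p s)
          = ∑ B' ∈ Finset.univ.filter (fun B' : Finset (X tF) => B tF ⊆ B'),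
            ν p * (((-1 : ℝ) ^ ((B' \ B tF).card) *
              (if B' ⊆ insert (x tF) (Finset.univ.filter fun y => (p tF).val (x tF) y = true)
                then (1:ℝ) else 0)) * ∏ s ∈ Finset.univ.erase tF, bmFactor t B x p s) := by
            refine Finset.sum_congr rfl fun B' hB' => ?_
            rw [hsplit B' (by simpa using hB')]; ring
        _ = ν p * ∑ B' ∈ Finset.univ.filter (fun B' : Finset (X tF) => B tF ⊆ B'),
            (((-1 : ℝ) ^ ((B' \ B tF).card) *
              (if B' ⊆ insert (x tF) (Finset.univ.filter fun y => (p tF).val (x tF) y = true)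
                then (1:ℝ) else 0)) * ∏ s ∈ Finset.univ.erase tF, bmFactor t B x p s) := by
            rw [Finset.mul_sum]
        _ = ν p * ((∑ B' ∈ Finset.univ.filter (fun B' : Finset (X tF) => B tF ⊆ B'),
            (-1 : ℝ) ^ ((B' \ B tF).card) *
              (if B' ⊆ insert (x tF) (Finset.univ.filter fun y => (p tF).val (x tF) y = true)
                then (1:ℝ) else 0)) * ∏ s ∈ Finset.univ.erase tF, bmFactor t B x p s) := by
            rw [Finset.sum_mul]
        _ = _ := by rw [sign_sum_indicator]
    rw [hgoal]
    congr 1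
    rw [← Finset.mul_prod_erase Finset.univ _ (Finset.mem_univ tF)]
    congr 1
    unfold bmFactor
    rw [if_neg (show ¬ ((tF : ℕ) < t) by exact lt_irrefl t)]

/-- a dynamic stochastic choice function generated by a distribution over
profiles of linear orders satisfies the DRUM Block–Marschak inequalities `𝔹_t ≥ 0`. -/
theorem drum_blockMarschak_inequalities
    (T : ℕ) (X : Fin T → Type*) [∀ t, Fintype (X t)] [∀ t, DecidableEq (X t)]
    (ρbar : (∀ t, Finset (X t)) → (∀ t, X t) → ℝ)
    (ν : (∀ t, StrictLinOn (X t)) → ℝ) (hν0 : 0 ≤ ν) (hν1 : ∑ p, ν p = 1)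
    (hgen : ∀ B : ∀ t, Finset (X t), (∀ t, (B t).Nonempty) →
      ∀ x : ∀ t, X t, (∀ t, x t ∈ B t) →
        ρbar B x = ∑ p : ∀ t, StrictLinOn (X t), ν p *
          (if ∀ t, ∀ y ∈ B t, y ≠ x t → (p t).val (x t) y = true then 1 else 0)) :
    ∀ t : ℕ, t < T → ∀ B : ∀ s, Finset (X s), (∀ s, (B s).Nonempty) →
      ∀ x : ∀ s, X s, (∀ s, x s ∈ B s) → 0 ≤ drumBM ρbar t B x := by
  intro t ht B hB x hx
  rw [drumBM_formula T X ρbar ν hgen (T - t) t (by omega) B hB x hx]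
  refine Finset.sum_nonneg fun p _ => mul_nonneg (hν0 p) ?_
  exact Finset.prod_nonneg fun s _ => bmFactor_nonneg t B x p s


end
end
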